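/- arXiv:math/0309044 — 7 statements merged into one kernel-verified Lean document; each statement's English description precedes it below -/
import Mathlib

section
/- For any two different values γ, μ ∈ (0,1), the metrics δ_γ and δ_μ on the Cantor set C are not bi-Lipschitz equivalent: there exist no constants k, K > 0 such that k·δ_γ(x,y) ≤ δ_μ(x,y) ≤ K·δ_γ(x,y) for all x, y ∈ C. -/
/-- The metric `δ_γ` on the Cantor set `∏_{n∈ℕ} {0,1}`, realized as `ℕ → Fin 2`. -/
noncomputable def cantorDist (γ : ℝ) (x y : ℕ → Fin 2) : ℝ :=
  (1 - γ) * ∑' n : ℕ, |((x n : ℕ) : ℝ) - ((y n : ℕ) : ℝ)| * γ ^ n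

lemma cantorDist_single (γ : ℝ) (N : ℕ) :
    cantorDist γ (fun n => if n = N then 1 else 0) (fun _ => 0) = (1 - γ) * γ ^ N := by
  unfold cantorDist
  congr 1
  rw [tsum_eq_single N]
  · simp
  · intro n hn
    simp [hn]

/-- For different `γ, μ ∈ (0,1)`, the metrics `δ_γ` and `δ_μ` on the Cantor set are not
bi-Lipschitz equivalent. -/
theorem cantorDist_not_biLipschitz_equivalent (γ μ : ℝ)
    (hγ : γ ∈ Set.Ioo (0 : ℝ) 1) (hμ : μ ∈ Set.Ioo (0 : ℝ) 1) (hne : γ ≠ μ) :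
    ¬ ∃ k K : ℝ, 0 < k ∧ 0 < K ∧ ∀ x y : ℕ → Fin 2,
        k * cantorDist γ x y ≤ cantorDist μ x y ∧
        cantorDist μ x y ≤ K * cantorDist γ x y := by
  rintro ⟨k, K, hk, hK, h⟩
  obtain ⟨hγ0, hγ1⟩ := hγ
  obtain ⟨hμ0, hμ1⟩ := hμ
  have key : ∀ N : ℕ, k * ((1 - γ) * γ ^ N) ≤ (1 - μ) * μ ^ N ∧
      (1 - μ) * μ ^ N ≤ K * ((1 - γ) * γ ^ N) := by
    intro N
    have := h (fun n => if n = N then 1 else 0) (fun _ => 0)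
    rwa [cantorDist_single, cantorDist_single] at this
  rcases lt_or_gt_of_ne hne with hlt | hlt
  · -- γ < μ : upper bound fails, (μ/γ)^N unbounded
    have hr : 1 < μ / γ := (one_lt_div hγ0).2 hlt
    obtain ⟨N, hN⟩ := pow_unbounded_of_one_lt (K * (1 - γ) / (1 - μ)) hr
    have h2 := (key N).2
    have hμpos : (0:ℝ) < 1 - μ := by linarith
    rw [div_pow, lt_div_iff₀ (by positivity), div_mul_eq_mul_div, div_lt_iff₀ hμpos] at hN
    have : (1 - μ) * μ ^ N > K * ((1 - γ) * γ ^ N) := by ring_nf at hN ⊢; linarith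
    linarith
  · -- μ < γ : lower bound fails
    have hr : 1 < γ / μ := (one_lt_div hμ0).2 hlt
    obtain ⟨N, hN⟩ := pow_unbounded_of_one_lt ((1 - μ) / (k * (1 - γ))) hr
    have h1 := (key N).1
    have hγpos : (0:ℝ) < 1 - γ := by linarith
    rw [div_pow, lt_div_iff₀ (by positivity), div_mul_eq_mul_div, div_lt_iff₀ (by positivity)] at hN
    have : (1 - μ) * μ ^ N < k * ((1 - γ) * γ ^ N) := by ring_nf at hN ⊢; linarith
    linarith
end

section
/- Let γ ∈ (0,1), let e = ⌊log 2 / (−log γ)⌋ + 1 (so that 2·γ^e < 1), and define F_γ : C → ℝ^e coordinatewise by F_γ(x)(i) = ∑_{p=0}^∞ x(i + p·e)·(γ^e)^p·(1 − γ^e) for i ∈ {0,…,e−1}. Then F_γ is bi-Lipschitz from (C, δ_γ) onto its image in Euclidean space ℝ^e: for all x, y ∈ C, (1 − 2γ^e)·γ·δ_γ(x,y) ≤ ‖F_γ(x) − F_γ(y)‖ ≤ (γ^{1−e}/(1−γ))·δ_γ(x,y), where ‖·‖ is the Euclidean norm on ℝ^e. -/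
set_option maxHeartbeats 1000000 in
lemma abs_tsum_le' {f : ℕ → ℝ} (h : Summable fun n => |f n|) :
    |∑' n, f n| ≤ ∑' n, |f n| := by
  have h' : Summable fun n => ‖f n‖ := h
  simpa only [Real.norm_eq_abs] using norm_tsum_le_tsum_norm h'

noncomputable def cantorEmbDim (γ : ℝ) : ℕ :=
  Nat.floor (Real.log 2 / (-Real.log γ)) + 1

noncomputable def cantorEmb (γ : ℝ) (x : ℕ → Fin 2) : EuclideanSpace ℝ (Fin (cantorEmbDim γ)) :=
  (WithLp.equiv 2 (Fin (cantorEmbDim γ) → ℝ)).symm fun i =>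
    ∑' p : ℕ, ((x ((i : ℕ) + p * cantorEmbDim γ) : ℕ) : ℝ)
      * (γ ^ cantorEmbDim γ) ^ p * (1 - γ ^ cantorEmbDim γ)

set_option maxHeartbeats 2000000 in
/-- For `γ ∈ (0,1)` and `e = ⌊log 2 / (−log γ)⌋ + 1`, the map `F_γ` is bi-Lipschitz from
`(C, δ_γ)` into Euclidean space `ℝ^e`:
`(1 − 2γ^e)·γ·δ_γ(x,y) ≤ ‖F_γ(x) − F_γ(y)‖ ≤ (γ^{1−e}/(1−γ))·δ_γ(x,y)`. -/
theorem cantorEmb_biLipschitz (γ : ℝ) (hγ : γ ∈ Set.Ioo (0 : ℝ) 1) (x y : ℕ → Fin 2) :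
    (1 - 2 * γ ^ cantorEmbDim γ) * γ * cantorDist γ x y ≤ ‖cantorEmb γ x - cantorEmb γ y‖ ∧
    ‖cantorEmb γ x - cantorEmb γ y‖
      ≤ γ ^ (1 - (cantorEmbDim γ : ℤ)) / (1 - γ) * cantorDist γ x y := by
  obtain ⟨hγ0, hγ1⟩ := hγ
  have hγne : γ ≠ 0 := ne_of_gt hγ0
  set e := cantorEmbDim γ with he
  have he1 : 1 ≤ e := Nat.le_add_left 1 _
  haveI : NeZero e := ⟨by omega⟩
  set β := γ ^ e with hβdef
  have hβ0 : 0 < β := pow_pos hγ0 e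
  -- 2β < 1
  have hβhalf : 2 * β < 1 := by
    have hlog : Real.log γ < 0 := Real.log_neg hγ0 hγ1
    have hL : Real.log 2 / (-Real.log γ) < (e : ℝ) := by
      have h := Nat.lt_floor_add_one (Real.log 2 / (-Real.log γ))
      rw [he, cantorEmbDim]
      push_cast
      linarith
    have h2 : Real.log 2 < (e : ℝ) * (-Real.log γ) :=
      (div_lt_iff₀ (by linarith)).mp hL
    have hlogβ : Real.log (2 * β) < 0 := by
      rw [Real.log_mul (by norm_num) (ne_of_gt hβ0), hβdef, Real.log_pow]
      push_cast
      linarith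
    exact (Real.log_neg_iff (by positivity)).mp hlogβ
  have hβ1 : β < 1 := by linarith
  have h1β : (0:ℝ) < 1 - β := by linarith
  have h1γ : (0:ℝ) < 1 - γ := by linarith
  -- the distance function on coordinates
  set d : ℕ → ℝ := fun n => |((x n : ℕ) : ℝ) - ((y n : ℕ) : ℝ)| with hddef
  have hd0 : ∀ n, 0 ≤ d n := fun n => abs_nonneg _
  have hd1 : ∀ n, d n ≤ 1 := by
    intro n
    have hx : ((x n : ℕ) : ℝ) ≤ 1 := by exact_mod_cast Nat.lt_succ_iff.mp (x n).isLt
    have hy : ((y n : ℕ) : ℝ) ≤ 1 := by exact_mod_cast Nat.lt_succ_iff.mp (y n).isLt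
    have hx0 : (0:ℝ) ≤ ((x n : ℕ) : ℝ) := Nat.cast_nonneg _
    have hy0 : (0:ℝ) ≤ ((y n : ℕ) : ℝ) := Nat.cast_nonneg _
    rw [hddef]
    exact abs_le.mpr ⟨by linarith, by linarith⟩
  have hsumd : Summable (fun n => d n * γ ^ n) :=
    Summable.of_nonneg_of_le
      (fun n => mul_nonneg (hd0 n) (pow_nonneg hγ0.le n))
      (fun n => mul_le_of_le_one_left (pow_nonneg hγ0.le n) (hd1 n))
      (summable_geometric_of_lt_one hγ0.le hγ1)
  -- coordinatewise summabilities
  have hgeoβ : Summable (fun p : ℕ => β ^ p * (1 - β)) :=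
    (summable_geometric_of_lt_one hβ0.le hβ1).mul_right _
  have hsumcoord : ∀ z : ℕ → Fin 2, ∀ i : Fin e,
      Summable (fun p : ℕ => ((z ((i : ℕ) + p * e) : ℕ) : ℝ) * β ^ p * (1 - β)) := by
    intro z i
    refine Summable.of_nonneg_of_le (fun p => by positivity) (fun p => ?_) hgeoβ
    have hz : ((z ((i : ℕ) + p * e) : ℕ) : ℝ) ≤ 1 := by
      exact_mod_cast Nat.lt_succ_iff.mp (z _).isLt
    have : ((z ((i : ℕ) + p * e) : ℕ) : ℝ) * β ^ p ≤ β ^ p :=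
      mul_le_of_le_one_left (pow_nonneg hβ0.le p) hz
    nlinarith [pow_nonneg hβ0.le p]
  set c : ℕ → ℝ := fun n => ((x n : ℕ) : ℝ) - ((y n : ℕ) : ℝ) with hcdef
  have habsc : ∀ n, |c n| = d n := fun n => rfl
  set v : Fin e → ℝ := fun i => ∑' p : ℕ, c ((i : ℕ) + p * e) * β ^ p * (1 - β) with hvdef
  have hsumv : ∀ i : Fin e, Summable (fun p : ℕ => c ((i : ℕ) + p * e) * β ^ p * (1 - β)) := by
    intro i
    have := (hsumcoord x i).sub (hsumcoord y i)
    refine this.congr fun p => ?_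
    simp only [hcdef]
    ring
  have hFd : ∀ i : Fin e, (cantorEmb γ x - cantorEmb γ y) i = v i := by
    intro i
    simp only [cantorEmb, PiLp.sub_apply, WithLp.equiv_symm_apply, PiLp.toLp_apply, ← he, ← hβdef]
    rw [← Summable.tsum_sub (hsumcoord x i) (hsumcoord y i)]
    refine tsum_congr fun p => ?_
    simp only [hcdef]
    ring
  have hnorm : ‖cantorEmb γ x - cantorEmb γ y‖ = Real.sqrt (∑ i : Fin e, (v i) ^ 2) := by
    rw [EuclideanSpace.norm_eq]
    congr 1
    refine Finset.sum_congr rfl fun i _ => ?_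
    rw [hFd i, Real.norm_eq_abs, sq_abs]
  -- summability of slice sums
  have hsumS : ∀ i : Fin e, Summable (fun p : ℕ => d ((i : ℕ) + p * e) * γ ^ ((i : ℕ) + p * e)) := by
    intro i
    refine Summable.of_nonneg_of_le (fun p => mul_nonneg (hd0 _) (pow_nonneg hγ0.le _))
      (fun p => ?_) ((summable_geometric_of_lt_one hβ0.le hβ1).mul_left (γ ^ (i : ℕ)))
    have : γ ^ ((i : ℕ) + p * e) = γ ^ (i : ℕ) * β ^ p := by
      rw [hβdef, ← pow_mul, Nat.mul_comm e p, ← pow_add]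
    rw [this]
    exact mul_le_of_le_one_left (by positivity) (hd1 _)
  -- reindexing ℕ ≃ Fin e × ℕ
  have hreindex : ∑ i : Fin e, (∑' p : ℕ, d ((i : ℕ) + p * e) * γ ^ ((i : ℕ) + p * e))
      = ∑' n : ℕ, d n * γ ^ n := by
    set f : ℕ → ℝ := fun n => d n * γ ^ n with hfdef
    have hepos : 0 < e := by omega
    let j : Fin e × ℕ ≃ ℕ :=
      { toFun := fun q => (q.1 : ℕ) + q.2 * e
        invFun := fun n => (⟨n % e, Nat.mod_lt _ hepos⟩, n / e)
        left_inv := by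
          rintro ⟨i, p⟩
          have h1 : ((i : ℕ) + p * e) % e = (i : ℕ) := by
            rw [Nat.add_mul_mod_self_right, Nat.mod_eq_of_lt i.isLt]
          have h2 : ((i : ℕ) + p * e) / e = p := by
            rw [Nat.add_mul_div_right _ _ hepos, Nat.div_eq_of_lt i.isLt, Nat.zero_add]
          exact Prod.ext (Fin.ext h1) h2
        right_inv := fun n => Nat.mod_add_div' n e }
    have hj : Summable (f ∘ j) := j.summable_iff.mpr hsumd
    have hj' : Summable (fun q : Fin e × ℕ => f ((q.1 : ℕ) + q.2 * e)) := hj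
    rw [← j.tsum_eq f]
    have : ∑' q : Fin e × ℕ, f (j q) = ∑' (i : Fin e) (p : ℕ), f ((i : ℕ) + p * e) :=
      Summable.tsum_prod' hj' fun i => by
        refine Summable.of_nonneg_of_le (fun p => mul_nonneg (hd0 _) (pow_nonneg hγ0.le _))
          (fun p => le_refl _) (hsumS i)
    rw [this]
    rw [tsum_fintype]
  -- per-coordinate upper bound
  have hvle : ∀ i : Fin e, |v i| ≤ γ ^ ((1 : ℤ) - e) * ∑' p : ℕ, d ((i : ℕ) + p * e) * γ ^ ((i : ℕ) + p * e) := by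
    intro i
    have habs : Summable (fun p : ℕ => |c ((i : ℕ) + p * e) * β ^ p * (1 - β)|) := by
      refine Summable.of_nonneg_of_le (fun p => abs_nonneg _) (fun p => ?_) hgeoβ
      rw [abs_mul, abs_mul, habsc, abs_of_nonneg (pow_nonneg hβ0.le p), abs_of_nonneg h1β.le]
      have := mul_le_of_le_one_left (pow_nonneg hβ0.le p) (hd1 ((i : ℕ) + p * e))
      nlinarith
    have h1 : |v i| ≤ ∑' p : ℕ, |c ((i : ℕ) + p * e) * β ^ p * (1 - β)| :=
      abs_tsum_le' habs
    refine h1.trans ?_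
    rw [← tsum_mul_left]
    refine Summable.tsum_le_tsum (fun p => ?_) habs ((hsumS i).mul_left _)
    rw [abs_mul, abs_mul, habsc, abs_of_nonneg (pow_nonneg hβ0.le p), abs_of_nonneg h1β.le]
    have hkey : β ^ p ≤ γ ^ ((1 : ℤ) - e) * γ ^ ((i : ℕ) + p * e) := by
      have h1 : γ ^ ((1 : ℤ) - e) * γ ^ ((i : ℕ) + p * e)
          = γ ^ ((1 - (e : ℤ)) + ((i : ℕ) + p * e : ℕ)) := by
        rw [zpow_add₀ hγne, zpow_natCast]
      have h2 : β ^ p = γ ^ ((p * e : ℕ) : ℤ) := by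
        rw [hβdef, ← pow_mul, zpow_natCast, mul_comm e p]
      rw [h1, h2]
      refine zpow_le_zpow_right_of_le_one₀ hγ0 hγ1.le ?_
      have : (i : ℕ) < e := i.isLt
      push_cast
      omega
    calc d ((i : ℕ) + p * e) * β ^ p * (1 - β)
        ≤ d ((i : ℕ) + p * e) * β ^ p := by
          nlinarith [mul_nonneg (hd0 ((i : ℕ) + p * e)) (pow_nonneg hβ0.le p)]
      _ ≤ d ((i : ℕ) + p * e) * (γ ^ ((1 : ℤ) - e) * γ ^ ((i : ℕ) + p * e)) :=
          mul_le_mul_of_nonneg_left hkey (hd0 _)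
      _ = γ ^ ((1 : ℤ) - e) * (d ((i : ℕ) + p * e) * γ ^ ((i : ℕ) + p * e)) := by ring
  -- Upper bound
  have hupper : ‖cantorEmb γ x - cantorEmb γ y‖
      ≤ γ ^ (1 - (e : ℤ)) / (1 - γ) * cantorDist γ x y := by
    rw [hnorm]
    have h1 : Real.sqrt (∑ i : Fin e, (v i) ^ 2) ≤ ∑ i : Fin e, |v i| := by
      have h2 : ∑ i : Fin e, (v i) ^ 2 ≤ (∑ i : Fin e, |v i|) ^ 2 := by
        refine le_trans (le_of_eq ?_) (Finset.sum_sq_le_sq_sum_of_nonneg fun i _ => abs_nonneg _)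
        exact Finset.sum_congr rfl fun i _ => (sq_abs (v i)).symm
      calc Real.sqrt (∑ i : Fin e, (v i) ^ 2) ≤ Real.sqrt ((∑ i : Fin e, |v i|) ^ 2) :=
            Real.sqrt_le_sqrt h2
        _ = abs (∑ i : Fin e, |v i|) := Real.sqrt_sq_eq_abs _
        _ = ∑ i : Fin e, |v i| := abs_of_nonneg (Finset.sum_nonneg fun i _ => abs_nonneg _)
    refine h1.trans ?_
    have h3 : ∑ i : Fin e, |v i|
        ≤ γ ^ ((1 : ℤ) - e) * ∑' n : ℕ, d n * γ ^ n := by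
      calc ∑ i : Fin e, |v i|
          ≤ ∑ i : Fin e, γ ^ ((1 : ℤ) - e) * ∑' p : ℕ, d ((i : ℕ) + p * e) * γ ^ ((i : ℕ) + p * e) :=
            Finset.sum_le_sum fun i _ => hvle i
        _ = γ ^ ((1 : ℤ) - e) * ∑ i : Fin e, ∑' p : ℕ, d ((i : ℕ) + p * e) * γ ^ ((i : ℕ) + p * e) := by
            rw [Finset.mul_sum]
        _ = γ ^ ((1 : ℤ) - e) * ∑' n : ℕ, d n * γ ^ n := by rw [hreindex]
    refine h3.trans (le_of_eq ?_)
    rw [cantorDist]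
    field_simp
    ring
  refine ⟨?_, hupper⟩
  -- Lower bound
  by_cases hxy : x = y
  · subst hxy
    have hd' : ∀ n, d n = 0 := fun n => by simp [hddef]
    have : cantorDist γ x x = 0 := by
      rw [cantorDist]
      have : ∑' n : ℕ, |((x n : ℕ) : ℝ) - ((x n : ℕ) : ℝ)| * γ ^ n = 0 := by
        simp
      rw [this, mul_zero]
    rw [this, mul_zero]
    exact norm_nonneg _
  · have hex : ∃ n, x n ≠ y n := by
      by_contra h
      push_neg at h
      exact hxy (funext h)
    set n₀ := Nat.find hex with hn₀def
    have hn₀ : x n₀ ≠ y n₀ := Nat.find_spec hex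
    have hmin : ∀ m, m < n₀ → x m = y m := fun m hm => by
      by_contra h
      exact Nat.find_min hex hm h
    have hepos : 0 < e := by omega
    set i₀ : Fin e := ⟨n₀ % e, Nat.mod_lt _ hepos⟩ with hi₀def
    set p₀ := n₀ / e with hp₀def
    have hn0eq : (i₀ : ℕ) + p₀ * e = n₀ := Nat.mod_add_div' n₀ e
    have hdn₀ : d n₀ = 1 := by
      have hne : (x n₀ : ℕ) ≠ (y n₀ : ℕ) := fun h => hn₀ (Fin.ext h)
      have hx2 : (x n₀ : ℕ) < 2 := (x n₀).isLt
      have hy2 : (y n₀ : ℕ) < 2 := (y n₀).isLt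
      rw [hddef]
      interval_cases h1 : (x n₀ : ℕ) <;> interval_cases h2 : (y n₀ : ℕ) <;>
        simp_all <;> norm_num
    have hczero : ∀ p, p < p₀ → c ((i₀ : ℕ) + p * e) = 0 := by
      intro p hp
      have hlt : (i₀ : ℕ) + p * e < n₀ := by
        rw [← hn0eq]
        have : p * e < p₀ * e := Nat.mul_lt_mul_of_lt_of_le hp (le_refl e) hepos
        omega
      rw [hcdef]
      simp [hmin _ hlt]
    -- lower bound on |v i₀|
    set g : ℕ → ℝ := fun p => c ((i₀ : ℕ) + p * e) * β ^ p * (1 - β) with hgdef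
    have hgsum : Summable g := hsumv i₀
    have hsplit : v i₀ = g p₀ + ∑' p : ℕ, if p = p₀ then 0 else g p := by
      rw [hvdef]
      exact Summable.tsum_eq_add_tsum_ite hgsum p₀
    have hgp₀ : |g p₀| = β ^ p₀ * (1 - β) := by
      rw [hgdef]
      simp only
      rw [abs_mul, abs_mul, habsc, hn0eq, hdn₀, abs_of_nonneg (pow_nonneg hβ0.le p₀),
        abs_of_nonneg h1β.le, one_mul]
    -- tail bound
    set hfun : ℕ → ℝ := fun p => if p ≤ p₀ then 0 else β ^ p * (1 - β) with hfundef
    have hhsum : Summable hfun := by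
      refine Summable.of_nonneg_of_le (fun p => ?_) (fun p => ?_) hgeoβ
      · rw [hfundef]; dsimp only; split <;> positivity
      · rw [hfundef]; dsimp only; split
        · positivity
        · exact le_refl _
    have htail_le : |∑' p : ℕ, if p = p₀ then 0 else g p| ≤ ∑' p : ℕ, hfun p := by
      have habs : ∀ p : ℕ, |if p = p₀ then 0 else g p| ≤ hfun p := by
        intro p
        by_cases hp : p = p₀
        · simp [hp, hfundef]
        · rw [if_neg hp, hfundef]
          dsimp only
          rcases lt_trichotomy p p₀ with h | h | h
          · rw [if_pos h.le, hgdef]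
            simp [hczero p h]
          · exact absurd h hp
          · rw [if_neg (by omega)]
            rw [hgdef]
            dsimp only
            rw [abs_mul, abs_mul, habsc, abs_of_nonneg (pow_nonneg hβ0.le p),
              abs_of_nonneg h1β.le]
            have := mul_le_of_le_one_left (pow_nonneg hβ0.le p) (hd1 ((i₀ : ℕ) + p * e))
            nlinarith
      have hsumabs : Summable (fun p : ℕ => |if p = p₀ then 0 else g p|) :=
        Summable.of_nonneg_of_le (fun p => abs_nonneg _) habs hhsum
      calc |∑' p : ℕ, if p = p₀ then 0 else g p|
          ≤ ∑' p : ℕ, |if p = p₀ then 0 else g p| := abs_tsum_le' hsumabs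
        _ ≤ ∑' p : ℕ, hfun p := Summable.tsum_le_tsum habs hsumabs hhsum
    have htail_val : ∑' p : ℕ, hfun p = β ^ (p₀ + 1) := by
      have h1 := Summable.sum_add_tsum_nat_add (f := hfun) (p₀ + 1) hhsum
      have h2 : ∑ i ∈ Finset.range (p₀ + 1), hfun i = 0 := by
        refine Finset.sum_eq_zero fun i hi => ?_
        rw [hfundef]
        simp only
        rw [if_pos (by simpa [Nat.lt_succ_iff] using Finset.mem_range.mp hi)]
      have h3 : ∀ i : ℕ, hfun (i + (p₀ + 1)) = β ^ i * (β ^ (p₀ + 1) * (1 - β)) := by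
        intro i
        rw [hfundef]
        simp only
        rw [if_neg (by omega), pow_add]
        ring
      have h4 : ∑' i : ℕ, hfun (i + (p₀ + 1)) = β ^ (p₀ + 1) := by
        rw [tsum_congr h3, tsum_mul_right, tsum_geometric_of_lt_one hβ0.le hβ1]
        field_simp
      rw [← h1, h2, zero_add, h4]
    have hvlow : β ^ p₀ * (1 - 2 * β) ≤ |v i₀| := by
      have h5 : |g p₀| - |∑' p : ℕ, if p = p₀ then 0 else g p| ≤ |v i₀| := by
        rw [hsplit]
        have := abs_add_le (g p₀ + ∑' p : ℕ, if p = p₀ then 0 else g p)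
          (-(∑' p : ℕ, if p = p₀ then 0 else g p))
        simp only [add_neg_cancel_right, abs_neg] at this
        linarith
      have h6 : |∑' p : ℕ, if p = p₀ then 0 else g p| ≤ β ^ (p₀ + 1) := by
        rw [← htail_val]; exact htail_le
      rw [hgp₀] at h5
      have : β ^ p₀ * (1 - β) - β ^ (p₀ + 1) = β ^ p₀ * (1 - 2 * β) := by
        rw [pow_succ]; ring
      linarith
    -- norm lower bound
    have hnormlow : |v i₀| ≤ ‖cantorEmb γ x - cantorEmb γ y‖ := by
      rw [hnorm]
      have h7 : (v i₀) ^ 2 ≤ ∑ i : Fin e, (v i) ^ 2 :=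
        Finset.single_le_sum (fun i _ => sq_nonneg (v i)) (Finset.mem_univ i₀)
      calc |v i₀| = Real.sqrt ((v i₀) ^ 2) := (Real.sqrt_sq_eq_abs _).symm
        _ ≤ Real.sqrt (∑ i : Fin e, (v i) ^ 2) := Real.sqrt_le_sqrt h7
    -- distance upper bound: cantorDist ≤ γ ^ n₀
    have hdistle : cantorDist γ x y ≤ γ ^ n₀ := by
      rw [cantorDist]
      have h1 := Summable.sum_add_tsum_nat_add (f := fun n => d n * γ ^ n) n₀ hsumd
      have h2 : ∑ i ∈ Finset.range n₀, d i * γ ^ i = 0 := by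
        refine Finset.sum_eq_zero fun i hi => ?_
        have : d i = 0 := by
          rw [hddef]
          simp [hmin i (Finset.mem_range.mp hi)]
        rw [this, zero_mul]
      have h3 : ∑' i : ℕ, d (i + n₀) * γ ^ (i + n₀) ≤ γ ^ n₀ * (1 - γ)⁻¹ := by
        have hb : ∀ i : ℕ, d (i + n₀) * γ ^ (i + n₀) ≤ γ ^ i * γ ^ n₀ := by
          intro i
          rw [pow_add]
          exact mul_le_of_le_one_left (by positivity) (hd1 _)
        calc ∑' i : ℕ, d (i + n₀) * γ ^ (i + n₀)
            ≤ ∑' i : ℕ, γ ^ i * γ ^ n₀ := by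
              refine Summable.tsum_le_tsum hb ?_ ?_
              · exact (summable_nat_add_iff n₀).mpr hsumd
              · exact (summable_geometric_of_lt_one hγ0.le hγ1).mul_right _
          _ = (1 - γ)⁻¹ * γ ^ n₀ := by
              rw [tsum_mul_right, tsum_geometric_of_lt_one hγ0.le hγ1]
          _ = γ ^ n₀ * (1 - γ)⁻¹ := by ring
      have h4 : ∑' n : ℕ, d n * γ ^ n ≤ γ ^ n₀ * (1 - γ)⁻¹ := by
        rw [← h1, h2, zero_add]
        exact h3
      calc (1 - γ) * ∑' n : ℕ, |((x n : ℕ) : ℝ) - ((y n : ℕ) : ℝ)| * γ ^ n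
          = (1 - γ) * ∑' n : ℕ, d n * γ ^ n := rfl
        _ ≤ (1 - γ) * (γ ^ n₀ * (1 - γ)⁻¹) := by
            exact mul_le_mul_of_nonneg_left h4 h1γ.le
        _ = γ ^ n₀ := by field_simp
    -- final chain
    have hβp₀ : γ ^ (n₀ + 1) ≤ β ^ p₀ := by
      rw [hβdef, ← pow_mul]
      refine pow_le_pow_of_le_one hγ0.le hγ1.le ?_
      have hcomm : e * p₀ = p₀ * e := Nat.mul_comm e p₀
      omega
    have h2β : 0 ≤ 1 - 2 * β := by linarith
    have hdist0 : 0 ≤ cantorDist γ x y := by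
      rw [cantorDist]
      refine mul_nonneg h1γ.le (tsum_nonneg fun n => ?_)
      exact mul_nonneg (abs_nonneg _) (pow_nonneg hγ0.le n)
    calc (1 - 2 * β) * γ * cantorDist γ x y
        ≤ (1 - 2 * β) * γ * γ ^ n₀ := by
          refine mul_le_mul_of_nonneg_left hdistle ?_
          exact mul_nonneg h2β hγ0.le
      _ = (1 - 2 * β) * γ ^ (n₀ + 1) := by ring
      _ ≤ (1 - 2 * β) * β ^ p₀ := mul_le_mul_of_nonneg_left hβp₀ h2β
      _ = β ^ p₀ * (1 - 2 * β) := by ring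
      _ ≤ |v i₀| := hvlow
      _ ≤ ‖cantorEmb γ x - cantorEmb γ y‖ := hnormlow
end

section
/- In ℓ¹(ℕ,ℝ), the closure of the union ⋃_{γ∈(0,1)} (1−γ)·C_γ equals {e₁} ∪ ⋃_{γ∈(0,1)} (1−γ)·C_γ, where e₁ ∈ ℓ¹(ℕ,ℝ) is the sequence with e₁(0) = 1 and e₁(n) = 0 for n ≥ 1, and (1−γ)·C_γ denotes the set of scalar multiples (1−γ)·v with v ∈ C_γ. -/
open scoped Pointwise

/-- The image `C_γ = f_γ(C) ⊆ ℓ¹(ℕ,ℝ)` of the Cantor set under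
`f_γ(x)(n) = (1−γ)·γ^n·x(n)`. -/
def cantorImage (γ : ℝ) : Set (lp (fun _ : ℕ => ℝ) 1) :=
  {v | ∃ x : ℕ → Fin 2, ∀ n : ℕ, (v : ℕ → ℝ) n = (1 - γ) * γ ^ n * ((x n : ℕ) : ℝ)}

open Filter Topology

/-- If `t k ∈ {0,1}`, `a → c` and `a·t → L`, then `L = 0` or `L = c`. -/
lemma aux_lim_mem {a t : ℕ → ℝ} {c L : ℝ} (ht : ∀ k, t k = 0 ∨ t k = 1)
    (ha : Tendsto a atTop (𝓝 c))
    (hL : Tendsto (fun k => a k * t k) atTop (𝓝 L)) : L = 0 ∨ L = c := by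
  by_cases h : ∃ᶠ k in atTop, t k = 0
  · left
    have hfreq : ∃ᶠ k in atTop, a k * t k ∈ ({0} : Set ℝ) :=
      h.mono fun k hk => by simp [hk]
    have := mem_closure_of_frequently_of_tendsto hfreq hL
    simpa using this
  · right
    rw [Filter.not_frequently] at h
    have h' : ∀ᶠ k in atTop, a k = a k * t k := by
      filter_upwards [h] with k hk
      rcases ht k with h0 | h1
      · exact absurd h0 hk
      · simp [h1]
    exact tendsto_nhds_unique hL (ha.congr' h')

lemma zero_mem_union :
    (0 : lp (fun _ : ℕ => ℝ) 1) ∈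
      ⋃ γ ∈ Set.Ioo (0 : ℝ) 1, (1 - γ) • cantorImage γ := by
  simp only [Set.mem_iUnion]
  refine ⟨1/2, by norm_num, ?_⟩
  refine ⟨0, ⟨fun _ => 0, fun n => by simp⟩, by simp⟩

set_option maxHeartbeats 1000000 in
set_option synthInstance.maxHeartbeats 200000 in
/-- In `ℓ¹(ℕ,ℝ)`, the closure of `⋃_{γ∈(0,1)} (1−γ)•C_γ` equals
`{e₁} ∪ ⋃_{γ∈(0,1)} (1−γ)•C_γ`, where `e₁` is the first standard basis vector. -/
theorem closure_union_scaled_cantorImages :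
    closure (⋃ γ ∈ Set.Ioo (0 : ℝ) 1, (1 - γ) • cantorImage γ)
      = insert (lp.single (E := fun _ : ℕ => ℝ) 1 (0 : ℕ) (1 : ℝ))
          (⋃ γ ∈ Set.Ioo (0 : ℝ) 1, (1 - γ) • cantorImage γ) := by
  set e1 : lp (fun _ : ℕ => ℝ) 1 := lp.single (E := fun _ : ℕ => ℝ) 1 (0 : ℕ) (1 : ℝ) with he1
  set S : Set (lp (fun _ : ℕ => ℝ) 1) :=
    ⋃ γ ∈ Set.Ioo (0 : ℝ) 1, (1 - γ) • cantorImage γ with hS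
  have he1coord : ∀ n : ℕ, (e1 : ℕ → ℝ) n = if n = 0 then 1 else 0 := by
    intro n
    by_cases h : n = 0
    · subst h; simp [he1, lp.single_apply_self]
    · simp [he1, lp.single_apply_ne _ _ _ h, h]
  apply Set.Subset.antisymm
  · -- closure S ⊆ insert e1 S
    intro v hv
    obtain ⟨u, hu, hlim⟩ := mem_closure_iff_seq_limit.mp hv
    have hdata : ∀ k, ∃ γ ∈ Set.Ioo (0 : ℝ) 1, ∃ x : ℕ → Fin 2,
        ∀ n, (u k : ℕ → ℝ) n = (1 - γ) ^ 2 * γ ^ n * ((x n : ℕ) : ℝ) := by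
      intro k
      have hk := hu k
      rw [hS] at hk
      simp only [Set.mem_iUnion] at hk
      obtain ⟨γ, hγ, hw⟩ := hk
      obtain ⟨w, ⟨x, hx⟩, huk⟩ := hw
      refine ⟨γ, hγ, x, fun n => ?_⟩
      have hcoe : (u k : ℕ → ℝ) n = (1 - γ) * (w : ℕ → ℝ) n := by
        rw [← huk]
        show ((((1 - γ) • w) : lp (fun _ : ℕ => ℝ) 1) : ℕ → ℝ) n = _
        rw [lp.coeFn_smul]; simp
      rw [hcoe, hx n]; ring
    choose γ hγ x hx using hdata
    have hγIcc : ∀ k, γ k ∈ Set.Icc (0 : ℝ) 1 := fun k => ⟨(hγ k).1.le, (hγ k).2.le⟩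
    obtain ⟨c, hc, φ, hφ, hγc⟩ := (isCompact_Icc (a := (0:ℝ)) (b := 1)).tendsto_subseq hγIcc
    have hlimφ : Tendsto (fun k => u (φ k)) atTop (𝓝 v) := hlim.comp hφ.tendsto_atTop
    -- coordinatewise convergence
    have hcoord : ∀ n : ℕ, Tendsto (fun k => (u (φ k) : ℕ → ℝ) n) atTop (𝓝 ((v : ℕ → ℝ) n)) := by
      intro n
      rw [tendsto_iff_norm_sub_tendsto_zero]
      have hnorm : Tendsto (fun k => ‖u (φ k) - v‖) atTop (𝓝 0) :=
        tendsto_iff_norm_sub_tendsto_zero.mp hlimφ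
      refine squeeze_zero (fun k => norm_nonneg _) (fun k => ?_) hnorm
      have h1 : (u (φ k) : ℕ → ℝ) n - (v : ℕ → ℝ) n = ((u (φ k) - v : lp (fun _ : ℕ => ℝ) 1) : ℕ → ℝ) n := by
        rw [lp.coeFn_sub]; simp
      rw [h1]
      exact lp.norm_apply_le_norm one_ne_zero _ n
    -- per-coordinate dichotomy
    have hv' : ∀ n : ℕ, (v : ℕ → ℝ) n = 0 ∨ (v : ℕ → ℝ) n = (1 - c) ^ 2 * c ^ n := by
      intro n
      have ha : Tendsto (fun k => (1 - γ (φ k)) ^ 2 * γ (φ k) ^ n) atTop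
          (𝓝 ((1 - c) ^ 2 * c ^ n)) :=
        ((tendsto_const_nhds.sub hγc).pow 2).mul (hγc.pow n)
      refine aux_lim_mem (t := fun k => ((x (φ k) n : ℕ) : ℝ)) (fun k => ?_) ha ?_
      · rcases Fin.exists_fin_two.mp ⟨x (φ k) n, rfl⟩ with h | h
        · left; show ((x (φ k) n : ℕ) : ℝ) = 0; rw [h]; simp
        · right; show ((x (φ k) n : ℕ) : ℝ) = 1; rw [h]; simp
      · refine (hcoord n).congr fun k => ?_
        rw [hx (φ k) n]
    by_cases h0 : c = 0
    · -- limit is 0 or e1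
      subst h0
      have hvn : ∀ n : ℕ, n ≠ 0 → (v : ℕ → ℝ) n = 0 := by
        intro n hn
        rcases hv' n with h | h
        · exact h
        · rw [h, zero_pow hn]; ring
      rcases hv' 0 with h | h
      · right
        have : v = 0 := by
          apply lp.ext
          funext n
          by_cases hn : n = 0
          · subst hn; simpa using h
          · simpa using hvn n hn
        rw [this]; exact zero_mem_union
      · left
        apply lp.ext
        funext n
        rw [he1coord n]
        by_cases hn : n = 0
        · subst hn; simpa using h
        · simp [hn, hvn n hn]
    · by_cases h1 : c = 1
      · subst h1
        right
        have : v = 0 := by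
          apply lp.ext
          funext n
          rcases hv' n with h | h
          · simpa using h
          · simp only [sub_self] at h
            simpa using h
        rw [this]; exact zero_mem_union
      · -- c ∈ (0,1)
        have hcIoo : c ∈ Set.Ioo (0 : ℝ) 1 :=
          ⟨lt_of_le_of_ne hc.1 (Ne.symm h0), lt_of_le_of_ne hc.2 h1⟩
        right
        rw [hS]
        simp only [Set.mem_iUnion]
        refine ⟨c, hcIoo, ?_⟩
        have hcne : (1 : ℝ) - c ≠ 0 := by
          intro h; apply h1; linarith
        refine ⟨(1 - c)⁻¹ • v, ⟨fun n => if (v : ℕ → ℝ) n = 0 then 0 else 1, fun n => ?_⟩, ?_⟩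
        · have hcoe : ((((1 - c)⁻¹ • v) : lp (fun _ : ℕ => ℝ) 1) : ℕ → ℝ) n
              = (1 - c)⁻¹ * (v : ℕ → ℝ) n := by
            rw [lp.coeFn_smul]; simp
          rw [hcoe]
          by_cases hvn : (v : ℕ → ℝ) n = 0
          · simp [hvn]
          · rcases hv' n with h | h
            · exact absurd h hvn
            · rw [h]
              simp only [hvn, if_false]
              rw [Fin.val_one]
              field_simp
              ring
        · show (1 - c) • ((1 - c)⁻¹ • v) = v
          rw [smul_smul, mul_inv_cancel₀ hcne, one_smul]
  · -- insert e1 S ⊆ closure S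
    rintro w (rfl | hw)
    · -- e1 ∈ closure S
      set g : ℕ → ℝ := fun k => ((k : ℝ) + 2)⁻¹ with hg
      have hat : Tendsto (fun k : ℕ => ((k : ℝ) + 2)) atTop atTop :=
        tendsto_atTop_add_const_right _ 2 tendsto_natCast_atTop_atTop
      have hg0 : Tendsto g atTop (𝓝 0) := tendsto_inv_atTop_zero.comp hat
      have hgIoo : ∀ k, g k ∈ Set.Ioo (0 : ℝ) 1 := by
        intro k
        have hk2 : (0:ℝ) < (k : ℝ) + 2 := by positivity
        constructor
        · positivity
        · rw [hg]
          have h1 : (1:ℝ) < (k : ℝ) + 2 := by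
            have : (0:ℝ) ≤ (k:ℝ) := Nat.cast_nonneg k
            linarith
          exact inv_lt_one_of_one_lt₀ h1
      have hmem : ∀ k, ((1 - g k) ^ 2) • e1 ∈ S := by
        intro k
        rw [hS]
        simp only [Set.mem_iUnion]
        refine ⟨g k, hgIoo k, ?_⟩
        refine ⟨(1 - g k) • e1, ⟨fun n => if n = 0 then 1 else 0, fun n => ?_⟩, ?_⟩
        · have hcoe : ((((1 - g k) • e1) : lp (fun _ : ℕ => ℝ) 1) : ℕ → ℝ) n
              = (1 - g k) * (e1 : ℕ → ℝ) n := by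
            rw [lp.coeFn_smul]; simp
          rw [hcoe, he1coord n]
          by_cases hn : n = 0
          · subst hn; simp
          · simp [hn]
        · show (1 - g k) • ((1 - g k) • e1) = (1 - g k) ^ 2 • e1
          rw [smul_smul]; ring_nf
      have hlim : Tendsto (fun k => ((1 - g k) ^ 2) • e1) atTop (𝓝 e1) := by
        have h1 : Tendsto (fun k => (1 - g k) ^ 2) atTop (𝓝 1) := by
          have := (tendsto_const_nhds (x := (1:ℝ)) (f := atTop)).sub hg0
          simpa using this.pow 2
        have := h1.smul_const e1
        simpa using this
      exact mem_closure_of_tendsto hlim (Filter.Eventually.of_forall hmem)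
    · exact subset_closure hw
end

section
/- The set E = closure(⋃_{γ∈(0,1)} (1−γ)·C_γ) is a compact subset of ℓ¹(ℕ,ℝ) of infinite Hausdorff dimension (its Hausdorff dimension, with respect to the ℓ¹ metric, is ∞). -/
open scoped Pointwise
open scoped ENNReal NNReal


lemma geom_bound {γ : ℝ} (h0 : 0 ≤ γ) (h1 : γ ≤ 1) (k : ℕ) :
    (1 - γ) * γ ^ k ≤ 1 / (k + 1) := by
  rw [le_div_iff₀ (by positivity)]
  have key : ((k:ℝ)+1) * γ^k ≤ ∑ i ∈ Finset.range (k+1), γ^i := by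
    have h : ((k:ℝ)+1) * γ^k = ∑ _i ∈ Finset.range (k+1), γ^k := by
      simp [Finset.sum_const, nsmul_eq_mul]
    rw [h]
    exact Finset.sum_le_sum fun i hi =>
      pow_le_pow_of_le_one h0 h1 (Nat.lt_succ_iff.mp (Finset.mem_range.mp hi))
  have hg : (1-γ) * ∑ i ∈ Finset.range (k+1), γ^i = 1 - γ^(k+1) := by
    have := geom_sum_mul γ (k+1)
    nlinarith [this]
  calc (1-γ) * γ^k * ((k:ℝ)+1) = (1-γ) * (((k:ℝ)+1) * γ^k) := by ring
    _ ≤ (1-γ) * ∑ i ∈ Finset.range (k+1), γ^i :=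
        mul_le_mul_of_nonneg_left key (by linarith)
    _ = 1 - γ^(k+1) := hg
    _ ≤ 1 := by nlinarith [pow_nonneg h0 (k+1)]

noncomputable def Abnd (n : ℕ) : ℝ := 4 / ((n:ℝ) + 1)^2

lemma Abnd_summable : Summable Abnd := by
  have h : Summable (fun n : ℕ => 1 / ((n:ℝ))^2) := by
    rw [Real.summable_one_div_nat_pow]; norm_num
  have h2 := ((summable_nat_add_iff 1).mpr h).mul_left 4
  refine h2.congr fun n => ?_
  simp [Abnd]
  push_cast
  ring

lemma Abnd_pos (n : ℕ) : 0 < Abnd n := by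
  rw [Abnd]; positivity

lemma sq_geom_bound {γ : ℝ} (h0 : 0 ≤ γ) (h1 : γ ≤ 1) (n : ℕ) :
    (1 - γ)^2 * γ ^ n ≤ Abnd n := by
  have ha := geom_bound h0 h1 (n / 2)
  have hb := geom_bound h0 h1 (n - n / 2)
  have hsplit : γ ^ n = γ ^ (n / 2) * γ ^ (n - n / 2) := by
    rw [← pow_add, Nat.add_sub_cancel' (Nat.div_le_self n 2)]
  have h1γ : (0:ℝ) ≤ 1 - γ := by linarith
  have hnn2 : 0 ≤ (1 - γ) * γ ^ (n - n / 2) := mul_nonneg h1γ (pow_nonneg h0 _)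
  have key : (1-γ)^2 * γ^n ≤ (1 / (((n/2 : ℕ):ℝ) + 1)) * (1 / (((n - n/2 : ℕ):ℝ) + 1)) := by
    calc (1-γ)^2 * γ^n = ((1-γ) * γ^(n/2)) * ((1-γ) * γ^(n - n/2)) := by
          rw [hsplit]; ring
      _ ≤ (1 / (((n/2 : ℕ):ℝ) + 1)) * (1 / (((n - n/2 : ℕ):ℝ) + 1)) :=
          mul_le_mul ha hb hnn2 (by positivity)
  refine key.trans ?_
  have hc : (n:ℝ) ≤ 2 * ((n/2 : ℕ):ℝ) + 1 := by
    have : n ≤ 2*(n/2)+1 := by omega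
    exact_mod_cast this
  have h2a : ((n:ℝ) + 1) / 2 ≤ ((n/2 : ℕ) : ℝ) + 1 := by linarith
  have h2b : ((n:ℝ) + 1) / 2 ≤ (((n - n/2 : ℕ)):ℝ) + 1 := by
    have h' : n / 2 ≤ n - n / 2 := by omega
    have : ((n/2 : ℕ):ℝ) ≤ ((n - n/2 : ℕ):ℝ) := by exact_mod_cast h'
    linarith
  have hpos : (0:ℝ) < ((n:ℝ) + 1) / 2 := by positivity
  have g1 : 1/(((n/2:ℕ):ℝ)+1) ≤ 1/(((n:ℝ)+1)/2) := one_div_le_one_div_of_le hpos h2a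
  have g2 : 1/((((n - n/2:ℕ)):ℝ)+1) ≤ 1/(((n:ℝ)+1)/2) := one_div_le_one_div_of_le hpos h2b
  calc (1 / (((n/2 : ℕ):ℝ) + 1)) * (1 / ((((n - n/2 : ℕ)):ℝ) + 1))
      ≤ (1 / (((n:ℝ) + 1)/2)) * (1 / (((n:ℝ) + 1)/2)) :=
        mul_le_mul g1 g2 (by positivity) (by positivity)
    _ = Abnd n := by rw [Abnd]; field_simp; ring



def cseq (γ : ℝ) (x : ℕ → Fin 2) : ℕ → ℝ := fun n => (1-γ)^2 * γ^n * ((x n : ℕ) : ℝ)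

lemma cseq_nonneg {γ : ℝ} (h0 : 0 ≤ γ) (x : ℕ → Fin 2) (n : ℕ) : 0 ≤ cseq γ x n := by
  unfold cseq; positivity

lemma cseq_le {γ : ℝ} (h0 : 0 ≤ γ) (h1 : γ ≤ 1) (x : ℕ → Fin 2) (n : ℕ) :
    cseq γ x n ≤ Abnd n := by
  have hx : ((x n : ℕ) : ℝ) ≤ 1 := by
    have := (x n).isLt
    have : (x n : ℕ) ≤ 1 := by omega
    exact_mod_cast this
  calc cseq γ x n ≤ (1-γ)^2 * γ^n * 1 :=
        mul_le_mul_of_nonneg_left hx (by positivity)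
    _ = (1-γ)^2 * γ^n := mul_one _
    _ ≤ Abnd n := sq_geom_bound h0 h1 n

lemma cseq_memℓp {γ : ℝ} (h0 : 0 ≤ γ) (h1 : γ ≤ 1) (x : ℕ → Fin 2) :
    Memℓp (cseq γ x) 1 := by
  apply memℓp_gen
  have : (1:ℝ≥0∞).toReal = 1 := by simp
  rw [this]
  simp only [Real.rpow_one]
  apply Abnd_summable.of_nonneg_of_le (fun n => norm_nonneg _)
  intro n
  rw [Real.norm_eq_abs, abs_of_nonneg (cseq_nonneg h0 x n)]
  exact cseq_le h0 h1 x n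

noncomputable def cvec (γ : ℝ) (h0 : 0 ≤ γ) (h1 : γ ≤ 1) (x : ℕ → Fin 2) :
    lp (fun _ : ℕ => ℝ) 1 := ⟨cseq γ x, cseq_memℓp h0 h1 x⟩

lemma cvec_apply (γ : ℝ) (h0 : 0 ≤ γ) (h1 : γ ≤ 1) (x : ℕ → Fin 2) (n : ℕ) :
    (cvec γ h0 h1 x : ℕ → ℝ) n = (1-γ)^2 * γ^n * ((x n : ℕ) : ℝ) := rfl


noncomputable def greedy (t : ℝ) : ℕ → ℝ
  | 0 => t
  | k+1 => if (1/2:ℝ)^k ≤ greedy t k then greedy t k - (1/2)^k else greedy t k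

noncomputable def gdigit (t : ℝ) (k : ℕ) : Fin 2 :=
  if (1/2:ℝ)^k ≤ greedy t k then 1 else 0

lemma greedy_inv {t : ℝ} (h0 : 0 ≤ t) (h2 : t ≤ 2) (k : ℕ) :
    0 ≤ greedy t k ∧ greedy t k ≤ 2 * (1/2)^k := by
  induction k with
  | zero => simpa [greedy] using ⟨h0, h2⟩
  | succ k ih =>
    rw [greedy]
    split_ifs with h
    · constructor
      · linarith
      · have := ih.2
        rw [pow_succ]
        linarith
    · push_neg at h
      refine ⟨ih.1, ?_⟩
      rw [pow_succ]
      nlinarith [pow_pos (by norm_num : (0:ℝ) < 1/2) k]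
  done

lemma greedy_partial (t : ℝ) (k : ℕ) :
    ∑ j ∈ Finset.range k, ((gdigit t j : ℕ) : ℝ) * (1/2)^j = t - greedy t k := by
  induction k with
  | zero => simp [greedy]
  | succ k ih =>
    rw [Finset.sum_range_succ, ih, greedy, gdigit]
    split_ifs with h
    · simp [Fin.val_one]
      ring
    · simp

lemma exists_binary (t : ℝ) (h0 : 0 ≤ t) (h2 : t ≤ 2) :
    ∃ x : ℕ → Fin 2, HasSum (fun k => ((x k : ℕ) : ℝ) * (1/2)^k) t := by
  refine ⟨gdigit t, ?_⟩
  have hgeo : Summable (fun k : ℕ => ((1:ℝ)/2)^k) :=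
    summable_geometric_of_lt_one (by norm_num) (by norm_num)
  have hle : ∀ k, ((gdigit t k : ℕ) : ℝ) * (1/2)^k ≤ (1/2)^k := by
    intro k
    have h1 : ((gdigit t k : ℕ) : ℝ) ≤ 1 := by
      have : (gdigit t k : ℕ) ≤ 1 := by omega
      exact_mod_cast this
    nlinarith [pow_pos (by norm_num : (0:ℝ) < 1/2) k]
  have hsum : Summable (fun k => ((gdigit t k : ℕ) : ℝ) * (1/2)^k) :=
    Summable.of_nonneg_of_le (fun k => by positivity) hle hgeo
  obtain ⟨s, hs⟩ := hsum
  have hps := hs.tendsto_sum_nat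
  have hgr : Filter.Tendsto (fun k => greedy t k) Filter.atTop (nhds 0) := by
    apply squeeze_zero (fun k => (greedy_inv h0 h2 k).1) (fun k => (greedy_inv h0 h2 k).2)
    have := tendsto_pow_atTop_nhds_zero_of_lt_one (by norm_num : (0:ℝ) ≤ 1/2) (by norm_num)
    simpa using this.const_mul 2
  have hto : Filter.Tendsto (fun k => ∑ j ∈ Finset.range k, ((gdigit t j : ℕ) : ℝ) * (1/2)^j)
      Filter.atTop (nhds t) := by
    simp only [greedy_partial]
    simpa using (tendsto_const_nhds (x := t)).sub hgr
  have : s = t := tendsto_nhds_unique hps hto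
  exact this ▸ hs

lemma cseq_abs_le {γ : ℝ} (h0 : 0 ≤ γ) (h1 : γ ≤ 1) (x : ℕ → Fin 2) (n : ℕ) :
    ‖cseq γ x n‖ ≤ Abnd n := by
  rw [Real.norm_eq_abs, abs_of_nonneg (cseq_nonneg h0 x n)]
  exact cseq_le h0 h1 x n


-- norm in ℓ¹
lemma norm_lp1 (f : lp (fun _ : ℕ => ℝ) 1) : ‖f‖ = ∑' n, ‖(f : ℕ → ℝ) n‖ := by
  rw [lp.norm_eq_tsum_rpow (by norm_num) f]
  simp

lemma summable_norm_lp1 (f : lp (fun _ : ℕ => ℝ) 1) :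
    Summable (fun n => ‖(f : ℕ → ℝ) n‖) := by
  have h := (lp.memℓp f).summable (p := 1) (by norm_num)
  simpa using h

noncomputable def Gmap (q : Set.Icc (0:ℝ) 1 × (ℕ → Fin 2)) : lp (fun _ : ℕ => ℝ) 1 :=
  ⟨cseq q.1 q.2, cseq_memℓp q.1.2.1 q.1.2.2 q.2⟩

noncomputable def Gpart (N : ℕ) (q : Set.Icc (0:ℝ) 1 × (ℕ → Fin 2)) :
    lp (fun _ : ℕ => ℝ) 1 :=
  ∑ i ∈ Finset.range N, lp.single 1 i (cseq q.1 q.2 i)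

lemma isometry_single (n : ℕ) : Isometry (fun a : ℝ => lp.single (E := fun _ : ℕ => ℝ) 1 n a) := by
  intro a b
  have hsub : lp.single (E := fun _ : ℕ => ℝ) 1 n a - lp.single 1 n b = lp.single 1 n (a - b) := by
    apply lp.ext
    funext j
    rcases eq_or_ne j n with rfl | hj
    · simp [lp.coeFn_sub, lp.single_apply_self]
    · simp [lp.coeFn_sub, lp.single_apply_ne _ _ _ hj]
  rw [edist_dist, edist_dist, dist_eq_norm, dist_eq_norm, hsub]
  congr 1
  have := lp.norm_single (E := fun _ : ℕ => ℝ) (p := 1) (by norm_num) n (a - b)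
  simpa using this

lemma continuous_Gpart (N : ℕ) : Continuous (Gpart N) := by
  apply continuous_finset_sum
  intro i _
  apply ((isometry_single i).continuous).comp
  have hγ : Continuous fun q : Set.Icc (0:ℝ) 1 × (ℕ → Fin 2) => (q.1 : ℝ) :=
    continuous_subtype_val.comp continuous_fst
  have hx : Continuous fun q : Set.Icc (0:ℝ) 1 × (ℕ → Fin 2) => ((q.2 i : ℕ) : ℝ) :=
    (continuous_of_discreteTopology (α := Fin 2) (f := fun v => ((v : ℕ) : ℝ))).comp
      ((continuous_apply i).comp continuous_snd)
  unfold cseq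
  fun_prop

lemma dist_Gmap_Gpart (N : ℕ) (q : Set.Icc (0:ℝ) 1 × (ℕ → Fin 2)) :
    dist (Gmap q) (Gpart N q) ≤ ∑' k, Abnd (k + N) := by
  have h0 : (0:ℝ) < (1:ℝ≥0∞).toReal := by norm_num
  have hnorm := lp.norm_compl_sum_single h0 (Gmap q) (Finset.range N)
  have hs : Summable (fun n => ‖(Gmap q : ℕ → ℝ) n‖) := summable_norm_lp1 _
  rw [dist_eq_norm]
  have heq : (Gmap q) - Gpart N q =
      (Gmap q) - ∑ i ∈ Finset.range N, lp.single 1 i ((Gmap q : ℕ → ℝ) i) := rfl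
  rw [heq]
  have key : ‖(Gmap q) - ∑ i ∈ Finset.range N, lp.single 1 i ((Gmap q : ℕ → ℝ) i)‖
      = ∑' k, ‖(Gmap q : ℕ → ℝ) (k + N)‖ := by
    have h2 := hnorm
    simp only [ENNReal.toReal_one, Real.rpow_one] at h2
    rw [norm_lp1 (Gmap q)] at h2
    have h3 := Summable.sum_add_tsum_nat_add (f := fun n => ‖(Gmap q : ℕ → ℝ) n‖) N hs
    rw [h2]
    simp only at h3 ⊢
    linarith
  rw [key]
  apply Summable.tsum_le_tsum
  · intro k
    exact cseq_abs_le q.1.2.1 q.1.2.2 q.2 (k + N)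
  · exact (summable_nat_add_iff N).mpr hs
  · exact (summable_nat_add_iff N).mpr Abnd_summable

lemma continuous_Gmap : Continuous Gmap := by
  have htail : Filter.Tendsto (fun N => ∑' k, Abnd (k + N)) Filter.atTop (nhds 0) :=
    tendsto_sum_nat_add Abnd
  refine TendstoUniformly.continuous (F := Gpart) (p := (Filter.atTop : Filter ℕ)) ?_
    (Filter.Eventually.of_forall continuous_Gpart).frequently
  rw [Metric.tendstoUniformly_iff]
  intro ε hε
  filter_upwards [htail.eventually (gt_mem_nhds hε)] with N hN q
  exact lt_of_le_of_lt (dist_Gmap_Gpart N q) hN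

lemma compact_closure_union :
    IsCompact (closure (⋃ γ ∈ Set.Ioo (0 : ℝ) 1, (1 - γ) • cantorImage γ)) := by
  haveI : CompactSpace (Set.Icc (0:ℝ) 1) := isCompact_iff_compactSpace.mp isCompact_Icc
  have hK : IsCompact (Set.range Gmap) := isCompact_range continuous_Gmap
  have hsub : (⋃ γ ∈ Set.Ioo (0 : ℝ) 1, (1 - γ) • cantorImage γ) ⊆ Set.range Gmap := by
    rintro v hv
    simp only [Set.mem_iUnion] at hv
    obtain ⟨γ, hγ, hv⟩ := hv
    obtain ⟨w, ⟨x, hw⟩, rfl⟩ := hv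
    refine ⟨(⟨γ, hγ.1.le, hγ.2.le⟩, x), ?_⟩
    apply lp.ext
    funext n
    rw [lp.coeFn_smul]
    show cseq γ x n = (1 - γ) * (w : ℕ → ℝ) n
    rw [hw n, cseq]
    ring
  exact hK.of_isClosed_subset isClosed_closure (closure_minimal hsub hK.isClosed)




noncomputable def Tmap (d : ℕ) (v : lp (fun _ : ℕ => ℝ) 1) : Fin d → ℝ :=
  fun i => ∑' k : ℕ, (v : ℕ → ℝ) (k * d + (i : ℕ))

lemma inj_strided {d : ℕ} (hd : 0 < d) (i : ℕ) :
    Function.Injective (fun k : ℕ => k * d + i) := by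
  intro a b hab
  simp only at hab
  have : a * d = b * d := by omega
  exact Nat.eq_of_mul_eq_mul_right hd this

lemma lip_Tmap {d : ℕ} (hd : 0 < d) : LipschitzWith 1 (Tmap d) := by
  apply LipschitzWith.of_dist_le_mul
  intro v w
  rw [NNReal.coe_one, one_mul, dist_pi_le_iff dist_nonneg]
  intro i
  have hinj := inj_strided hd (i : ℕ)
  have hnvw : Summable fun n => ‖(v : ℕ → ℝ) n - (w : ℕ → ℝ) n‖ := by
    have := summable_norm_lp1 (v - w)
    refine this.congr fun n => ?_
    rw [lp.coeFn_sub]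
    rfl
  have hv : Summable fun k => (v : ℕ → ℝ) (k * d + (i:ℕ)) :=
    ((summable_norm_lp1 v).of_norm).comp_injective hinj
  have hw : Summable fun k => (w : ℕ → ℝ) (k * d + (i:ℕ)) :=
    ((summable_norm_lp1 w).of_norm).comp_injective hinj
  have hsub : Summable fun k => ‖(v : ℕ → ℝ) (k * d + (i:ℕ)) - (w : ℕ → ℝ) (k * d + (i:ℕ))‖ :=
    hnvw.comp_injective hinj
  rw [Real.dist_eq]
  have h1 : Tmap d v i - Tmap d w i
      = ∑' k : ℕ, ((v : ℕ → ℝ) (k * d + (i:ℕ)) - (w : ℕ → ℝ) (k * d + (i:ℕ))) := by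
    rw [Tmap, Tmap, ← Summable.tsum_sub hv hw]
  rw [h1]
  calc |∑' k : ℕ, ((v : ℕ → ℝ) (k * d + (i:ℕ)) - (w : ℕ → ℝ) (k * d + (i:ℕ)))|
      ≤ ∑' k : ℕ, ‖(v : ℕ → ℝ) (k * d + (i:ℕ)) - (w : ℕ → ℝ) (k * d + (i:ℕ))‖ := by
        simpa using norm_tsum_le_tsum_norm hsub
    _ ≤ ∑' n : ℕ, ‖(v : ℕ → ℝ) n - (w : ℕ → ℝ) n‖ := by
        refine Summable.tsum_le_tsum_of_inj (fun k : ℕ => k * d + (i:ℕ)) hinj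
          (fun c _ => norm_nonneg _) (fun k => le_refl _) hsub hnvw
    _ = dist v w := by
        rw [dist_eq_norm, norm_lp1 (v - w)]
        refine tsum_congr fun n => ?_
        rw [lp.coeFn_sub]
        rfl

lemma memℓp_w {γ : ℝ} (h0 : 0 ≤ γ) (h1 : γ < 1) (x : ℕ → Fin 2) :
    Memℓp (fun n => (1-γ)*γ^n*((x n : ℕ) : ℝ)) 1 := by
  apply memℓp_gen
  have ht : (1:ℝ≥0∞).toReal = 1 := by simp
  rw [ht]
  simp only [Real.rpow_one]
  have hgeo : Summable (fun n : ℕ => (1-γ) * γ^n) :=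
    (summable_geometric_of_lt_one h0 h1).mul_left (1-γ)
  apply hgeo.of_nonneg_of_le (fun n => norm_nonneg _)
  intro n
  have hx1 : ((x n : ℕ) : ℝ) ≤ 1 := by
    have : (x n : ℕ) ≤ 1 := by omega
    exact_mod_cast this
  have hxn : (0:ℝ) ≤ ((x n : ℕ) : ℝ) := by positivity
  have hγn : (0:ℝ) ≤ γ^n := pow_nonneg h0 n
  have h1γ : (0:ℝ) ≤ 1 - γ := by linarith
  rw [Real.norm_eq_abs, abs_of_nonneg (by positivity)]
  nlinarith [mul_nonneg h1γ hγn]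

lemma box_subset_image {γ : ℝ} (h0 : 0 < γ) (h1 : γ < 1) {d : ℕ} (hd : 0 < d)
    (hγd : γ ^ d = 1/2) (y : Fin d → ℝ)
    (hy : ∀ i : Fin d, 0 ≤ y i ∧ y i ≤ 2 * ((1-γ)^2 * γ^(i:ℕ))) :
    y ∈ Tmap d '' ((1-γ) • cantorImage γ) := by
  have hγnz : (0:ℝ) < 1 - γ := by linarith
  have hc : ∀ i : Fin d, (0:ℝ) < (1-γ)^2 * γ^(i:ℕ) := fun i => by positivity
  -- digits for each coordinate
  have hdig : ∀ i : Fin d, ∃ b : ℕ → Fin 2,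
      HasSum (fun k => ((b k : ℕ) : ℝ) * (1/2)^k) (y i / ((1-γ)^2 * γ^(i:ℕ))) := by
    intro i
    apply exists_binary
    · exact div_nonneg (hy i).1 (hc i).le
    · rw [div_le_iff₀ (hc i)]
      linarith [(hy i).2]
  choose b hb using hdig
  set x : ℕ → Fin 2 := fun n => b ⟨n % d, Nat.mod_lt n hd⟩ (n / d) with hxdef
  set w : lp (fun _ : ℕ => ℝ) 1 :=
    ⟨fun n => (1-γ)*γ^n*((x n : ℕ) : ℝ), memℓp_w h0.le h1 x⟩ with hwdef
  set v : lp (fun _ : ℕ => ℝ) 1 := (1-γ) • w with hvdef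
  have hco : (v : ℕ → ℝ) = fun n => (1-γ)^2 * γ^n * ((x n : ℕ) : ℝ) := by
    rw [hvdef, lp.coeFn_smul]
    funext n
    show (1-γ) * ((w : ℕ → ℝ) n) = _
    show (1-γ) * ((1-γ)*γ^n*((x n : ℕ) : ℝ)) = _
    ring
  refine ⟨v, ?_, ?_⟩
  · exact Set.smul_mem_smul_set ⟨x, fun n => rfl⟩
  · funext i
    rw [Tmap]
    simp only [hco]
    have hxval : ∀ k : ℕ, x (k * d + (i:ℕ)) = b i k := by
      intro k
      have h1' : (k * d + (i:ℕ)) % d = (i:ℕ) := by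
        rw [mul_comm, Nat.mul_add_mod]
        exact Nat.mod_eq_of_lt i.isLt
      have h2' : (k * d + (i:ℕ)) / d = k := by
        rw [mul_comm, Nat.mul_add_div hd, Nat.div_eq_of_lt i.isLt, add_zero]
      show b ⟨(k * d + (i:ℕ)) % d, _⟩ ((k * d + (i:ℕ)) / d) = b i k
      rw [h2']
      congr 1
      exact Fin.ext h1'
    have hterm : ∀ k : ℕ, (1-γ)^2 * γ^(k * d + (i:ℕ)) * ((x (k * d + (i:ℕ)) : ℕ) : ℝ)
        = ((1-γ)^2 * γ^(i:ℕ)) * (((b i k : ℕ) : ℝ) * (1/2)^k) := by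
      intro k
      have hpow : γ ^ (k * d + (i:ℕ)) = γ^(i:ℕ) * (1/2)^k := by
        rw [pow_add, mul_comm k d, pow_mul, hγd, mul_comm]
      rw [hxval, hpow]
      ring
    have hsum2 := (hb i).mul_left ((1-γ)^2 * γ^(i:ℕ))
    have hfin : HasSum (fun k => (1-γ)^2 * γ^(k * d + (i:ℕ)) * ((x (k * d + (i:ℕ)) : ℕ) : ℝ))
        (((1-γ)^2 * γ^(i:ℕ)) * (y i / ((1-γ)^2 * γ^(i:ℕ)))) := by
      refine HasSum.congr_fun hsum2 ?_
      intro k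
      rw [hterm k]
    rw [hfin.tsum_eq, mul_div_cancel₀]
    exact (hc i).ne'

lemma dim_ge (d : ℕ) (hd : 0 < d) :
    (d : ℝ≥0∞) ≤ dimH (closure (⋃ γ ∈ Set.Ioo (0 : ℝ) 1, (1 - γ) • cantorImage γ)) := by
  set γ : ℝ := (1/2 : ℝ) ^ ((d : ℝ)⁻¹) with hγdef
  have hdR : (0:ℝ) < (d:ℝ)⁻¹ := by positivity
  have h0 : 0 < γ := Real.rpow_pos_of_pos (by norm_num) _
  have h1 : γ < 1 := Real.rpow_lt_one (by norm_num) (by norm_num) hdR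
  have hγd : γ ^ d = 1/2 := by
    rw [hγdef, ← Real.rpow_natCast ((1/2 : ℝ) ^ ((d : ℝ)⁻¹)) d, ← Real.rpow_mul (by norm_num),
      inv_mul_cancel₀ (by exact_mod_cast hd.ne' : (d:ℝ) ≠ 0), Real.rpow_one]
  have hγIoo : γ ∈ Set.Ioo (0:ℝ) 1 := ⟨h0, h1⟩
  set c : Fin d → ℝ := fun i => (1-γ)^2 * γ^(i:ℕ) with hcdef
  have hr : (0:ℝ) < (1-γ)^2 * γ^d := by
    have : (0:ℝ) < 1 - γ := by linarith
    positivity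
  have hball : Metric.ball c ((1-γ)^2 * γ^d) ⊆ Tmap d '' ((1-γ) • cantorImage γ) := by
    intro y hy
    apply box_subset_image h0 h1 hd hγd
    intro i
    have hdisti : dist (y i) (c i) < (1-γ)^2 * γ^d :=
      lt_of_le_of_lt (dist_le_pi_dist y c i) (Metric.mem_ball.mp hy)
    have hci : c i = (1-γ)^2 * γ^(i:ℕ) := rfl
    have hrc : (1-γ)^2 * γ^d ≤ c i := by
      rw [hci]
      have hγi : γ^d ≤ γ^(i:ℕ) :=
        pow_le_pow_of_le_one h0.le h1.le (Nat.le_of_lt i.isLt)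
      have : (0:ℝ) < 1 - γ := by linarith
      nlinarith
    rw [Real.dist_eq, abs_lt] at hdisti
    constructor
    · linarith [hdisti.1]
    · linarith [hdisti.2, hci.symm.le]
  calc (d : ℝ≥0∞) = dimH (Metric.ball c ((1-γ)^2 * γ^d)) :=
        (Real.dimH_ball_pi_fin c hr).symm
    _ ≤ dimH (Tmap d '' ((1-γ) • cantorImage γ)) := dimH_mono hball
    _ ≤ dimH ((1-γ) • cantorImage γ) := (lip_Tmap hd).dimH_image_le _
    _ ≤ dimH (⋃ γ ∈ Set.Ioo (0 : ℝ) 1, (1 - γ) • cantorImage γ) :=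
        dimH_mono (Set.subset_biUnion_of_mem (u := fun γ => (1-γ) • cantorImage γ) hγIoo)
    _ ≤ dimH (closure (⋃ γ ∈ Set.Ioo (0 : ℝ) 1, (1 - γ) • cantorImage γ)) :=
        dimH_mono subset_closure

lemma dim_top :
    dimH (closure (⋃ γ ∈ Set.Ioo (0 : ℝ) 1, (1 - γ) • cantorImage γ)) = ⊤ := by
  by_contra h
  obtain ⟨n, hn⟩ := ENNReal.exists_nat_gt h
  have h1 := dim_ge (n+1) n.succ_pos
  have h2 : (n : ℝ≥0∞) ≤ ((n+1 : ℕ) : ℝ≥0∞) := by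
    exact_mod_cast Nat.cast_le.mpr (Nat.le_succ n)
  exact absurd (h2.trans h1) (not_le.mpr hn)

/-- The set `E = closure (⋃_{γ∈(0,1)} (1−γ)·C_γ)` is a compact subset of `ℓ¹(ℕ,ℝ)` of
infinite Hausdorff dimension. -/
theorem compact_and_infinite_dimH_of_union_scaled_cantorImages :
    IsCompact (closure (⋃ γ ∈ Set.Ioo (0 : ℝ) 1, (1 - γ) • cantorImage γ)) ∧
    dimH (closure (⋃ γ ∈ Set.Ioo (0 : ℝ) 1, (1 - γ) • cantorImage γ)) = ⊤ :=
  ⟨compact_closure_union, dim_top⟩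
end

section
/- The set F = {x ∈ ℓ¹(ℕ,ℝ) : 0 ≤ x(n) ≤ 4/(n+2)² for all n ∈ ℕ} is a compact subset of ℓ¹(ℕ,ℝ), and for every γ ∈ (0,1) one has (1−γ)·C_γ ⊆ F. -/
open scoped Pointwise ENNReal

/-- AM-GM style estimate: `(n+1) s^n ≤ ∑_{i≤n} (s²)^i` for `s ≥ 0`. -/
lemma aux_gsum_ge (s : ℝ) (hs : 0 ≤ s) (n : ℕ) :
    ((n : ℝ) + 1) * s ^ n ≤ ∑ i ∈ Finset.range (n + 1), (s ^ 2) ^ i := by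
  have key : ∀ i ∈ Finset.range (n + 1), 2 * s ^ n ≤ (s ^ 2) ^ i + (s ^ 2) ^ (n - i) := by
    intro i hi
    have hin : i ≤ n := Nat.lt_succ_iff.mp (Finset.mem_range.mp hi)
    have hsum : s ^ i * s ^ (n - i) = s ^ n := by
      rw [← pow_add, Nat.add_sub_cancel' hin]
    have e1 : (s ^ 2) ^ i = (s ^ i) ^ 2 := by ring
    have e2 : (s ^ 2) ^ (n - i) = (s ^ (n - i)) ^ 2 := by ring
    nlinarith [sq_nonneg (s ^ i - s ^ (n - i))]
  have h2 : ∑ i ∈ Finset.range (n + 1), (2 * s ^ n)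
      ≤ ∑ i ∈ Finset.range (n + 1), ((s ^ 2) ^ i + (s ^ 2) ^ (n - i)) :=
    Finset.sum_le_sum key
  have hre : ∑ i ∈ Finset.range (n + 1), (s ^ 2) ^ (n - i)
      = ∑ i ∈ Finset.range (n + 1), (s ^ 2) ^ i := by
    have := Finset.sum_range_reflect (fun i => (s ^ 2) ^ i) (n + 1)
    simpa using this
  rw [Finset.sum_add_distrib, hre, Finset.sum_const, Finset.card_range,
    nsmul_eq_mul] at h2
  push_cast at h2
  linarith

/-- Key inequality: `(1-γ)² γ^n ≤ 4/(n+2)²` for `γ ∈ (0,1)`. -/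
lemma aux_key_ineq {γ : ℝ} (h0 : 0 < γ) (h1 : γ < 1) (n : ℕ) :
    (1 - γ) ^ 2 * γ ^ n ≤ 4 / ((n : ℝ) + 2) ^ 2 := by
  set s := Real.sqrt γ with hsdef
  have hs0 : 0 ≤ s := Real.sqrt_nonneg _
  have hs2 : s ^ 2 = γ := Real.sq_sqrt h0.le
  have hA : ((n : ℝ) + 1) * s ^ n ≤ ∑ i ∈ Finset.range (n + 1), γ ^ i := by
    have := aux_gsum_ge s hs0 n
    rw [hs2] at this
    exact this
  have hgeom : (1 - γ) * ∑ i ∈ Finset.range (n + 1), γ ^ i = 1 - γ ^ (n + 1) := by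
    linear_combination (-1 : ℝ) * geom_sum_mul γ (n + 1)
  have h1γ : (0 : ℝ) ≤ 1 - γ := by linarith
  have hB : (1 - γ) * (((n : ℝ) + 1) * s ^ n) ≤ 1 := by
    have hle := mul_le_mul_of_nonneg_left hA h1γ
    have hpow : (0 : ℝ) ≤ γ ^ (n + 1) := pow_nonneg h0.le _
    rw [hgeom] at hle
    linarith
  have hnonneg : (0 : ℝ) ≤ (1 - γ) * (((n : ℝ) + 1) * s ^ n) := by positivity
  have hsq : ((1 - γ) * (((n : ℝ) + 1) * s ^ n)) ^ 2 ≤ 1 := by nlinarith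
  have hsn : (s ^ n) ^ 2 = γ ^ n := by rw [← pow_mul, mul_comm, pow_mul, hs2]
  have hC : (1 - γ) ^ 2 * γ ^ n * ((n : ℝ) + 1) ^ 2 ≤ 1 := by
    have : ((1 - γ) * (((n : ℝ) + 1) * s ^ n)) ^ 2
        = (1 - γ) ^ 2 * γ ^ n * ((n : ℝ) + 1) ^ 2 := by
      rw [mul_pow, mul_pow, hsn]; ring
    linarith [hsq, this.symm.trans_le hsq]
  have hn2 : (0 : ℝ) < ((n : ℝ) + 2) ^ 2 := by positivity
  rw [le_div_iff₀ hn2]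
  have hP : (0 : ℝ) ≤ (1 - γ) ^ 2 * γ ^ n := by positivity
  have h4 : ((n : ℝ) + 2) ^ 2 ≤ 4 * ((n : ℝ) + 1) ^ 2 := by
    have : (0 : ℝ) ≤ (n : ℝ) := Nat.cast_nonneg n
    nlinarith
  nlinarith [mul_le_mul_of_nonneg_left h4 hP]

/-- `lp.single` for `p = 1` is an isometry in its value argument. -/
lemma aux_isometry_single (i : ℕ) :
    Isometry (fun a : ℝ => lp.single (E := fun _ : ℕ => ℝ) 1 i a) := by
  refine Isometry.of_dist_eq fun a b => ?_
  have hsub : lp.single (E := fun _ : ℕ => ℝ) 1 i a - lp.single 1 i b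
      = lp.single 1 i (a - b) := by
    apply lp.ext
    funext j
    rcases eq_or_ne j i with rfl | h
    · simp [lp.coeFn_sub, lp.single_apply_self]
    · simp [lp.coeFn_sub, lp.single_apply_ne _ _ _ h]
  have hp : 0 < (1 : ℝ≥0∞).toReal := by norm_num
  have := lp.norm_single (E := fun _ : ℕ => ℝ) (p := 1) one_pos i (a - b)
  rw [dist_eq_norm, hsub, dist_eq_norm]
  simpa using this

set_option maxHeartbeats 1000000 in
/-- The set `F = {x ∈ ℓ¹(ℕ,ℝ) : 0 ≤ x(n) ≤ 4/(n+2)² for all n}` is a compact subset of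
`ℓ¹(ℕ,ℝ)`, and `(1−γ)·C_γ ⊆ F` for every `γ ∈ (0,1)`. -/
theorem compact_box_contains_scaled_cantorImages :
    IsCompact {v : lp (fun _ : ℕ => ℝ) 1 |
        ∀ n : ℕ, 0 ≤ (v : ℕ → ℝ) n ∧ (v : ℕ → ℝ) n ≤ 4 / ((n : ℝ) + 2) ^ 2} ∧
    ∀ γ ∈ Set.Ioo (0 : ℝ) 1,
      (1 - γ) • cantorImage γ ⊆ {v : lp (fun _ : ℕ => ℝ) 1 |
        ∀ n : ℕ, 0 ≤ (v : ℕ → ℝ) n ∧ (v : ℕ → ℝ) n ≤ 4 / ((n : ℝ) + 2) ^ 2} := by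
  haveI : Fact ((1 : ℝ≥0∞) ≤ 1) := ⟨le_rfl⟩
  set g : ℕ → ℝ := fun n => 4 / ((n : ℝ) + 2) ^ 2 with hgdef
  set F : Set (lp (fun _ : ℕ => ℝ) 1) :=
    {v | ∀ n : ℕ, 0 ≤ (v : ℕ → ℝ) n ∧ (v : ℕ → ℝ) n ≤ g n} with hFdef
  have hp1 : (0 : ℝ) < (1 : ℝ≥0∞).toReal := by norm_num
  -- continuity of coordinate evaluations
  have heval : ∀ n : ℕ, Continuous fun v : lp (fun _ : ℕ => ℝ) 1 => (v : ℕ → ℝ) n := by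
    intro n
    refine (LipschitzWith.of_dist_le_mul (K := 1) fun v w => ?_).continuous
    have h1 : |((v : ℕ → ℝ) n - (w : ℕ → ℝ) n)| ≤ ‖v - w‖ := by
      have := lp.norm_apply_le_norm (E := fun _ : ℕ => ℝ) one_ne_zero (v - w) n
      simpa [lp.coeFn_sub, Real.norm_eq_abs] using this
    simpa [dist_eq_norm, Real.dist_eq, one_mul] using h1
  -- summability of the dominating sequence
  have hg : Summable g := by
    have h2 : Summable fun n : ℕ => 1 / (n : ℝ) ^ 2 :=
      Real.summable_one_div_nat_pow.mpr one_lt_two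
    have h3 : Summable fun n : ℕ => 1 / ((n + 2 : ℕ) : ℝ) ^ 2 :=
      (summable_nat_add_iff 2).mpr h2
    have h4 : Summable fun n : ℕ => 4 * (1 / ((n : ℝ) + 2) ^ 2) := by
      refine (h3.mul_left 4).congr fun n => ?_
      push_cast
      ring
    refine h4.congr fun n => ?_
    simp [hgdef]
    ring
  constructor
  · -- compactness
    refine TotallyBounded.isCompact_of_isClosed ?_ ?_
    · -- totally bounded
      rw [Metric.totallyBounded_iff]
      intro ε hε
      -- choose N with tail < ε/2
      obtain ⟨N, hN⟩ : ∃ N : ℕ, ∑' k : ℕ, g (k + N) < ε / 2 := by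
        have htend := hg.hasSum.tendsto_sum_nat
        rw [Metric.tendsto_atTop] at htend
        obtain ⟨N, hN⟩ := htend (ε / 2) (by linarith)
        refine ⟨N, ?_⟩
        have hdist := hN N le_rfl
        have hsplit := Summable.sum_add_tsum_nat_add (f := g) N hg
        rw [Real.dist_eq] at hdist
        have : ∑' k : ℕ, g (k + N) = (∑' n, g n) - ∑ i ∈ Finset.range N, g i := by
          linarith [hsplit]
        rw [this]
        have := abs_lt.mp hdist
        linarith [this.1, this.2]
      classical
      set Φ : (ℕ → ℝ) → lp (fun _ : ℕ => ℝ) 1 :=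
        fun x => ∑ i ∈ Finset.range N, lp.single 1 i (x i) with hΦdef
      have hΦcont : Continuous Φ := by
        refine continuous_finset_sum _ fun i _ => ?_
        exact (aux_isometry_single i).continuous.comp (continuous_apply i)
      have hK : IsCompact (Φ '' Set.pi Set.univ fun n : ℕ => Set.Icc (0 : ℝ) (g n)) :=
        (isCompact_univ_pi fun n => isCompact_Icc).image hΦcont
      obtain ⟨t, htfin, htcover⟩ :=
        Metric.totallyBounded_iff.mp hK.totallyBounded (ε / 2) (by linarith)
      refine ⟨t, htfin, fun v hv => ?_⟩
      have hvF : ∀ n : ℕ, 0 ≤ (v : ℕ → ℝ) n ∧ (v : ℕ → ℝ) n ≤ g n := hv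
      -- Φ ⇑v lies in the compact set
      have h1 : Φ (⇑v) ∈ Φ '' Set.pi Set.univ fun n : ℕ => Set.Icc (0 : ℝ) (g n) :=
        ⟨⇑v, fun n _ => ⟨(hvF n).1, (hvF n).2⟩, rfl⟩
      obtain ⟨y, hyt, hy⟩ := Set.mem_iUnion₂.mp (htcover h1)
      -- tail bound : ‖v - Φ ⇑v‖ ≤ tail sum
      have hsumv : Summable fun n : ℕ => ‖(v : ℕ → ℝ) n‖ := by
        have := (lp.memℓp v).summable hp1
        simpa using this
      have hnormv : ‖v‖ = ∑' n : ℕ, ‖(v : ℕ → ℝ) n‖ := by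
        have := lp.norm_eq_tsum_rpow hp1 v
        simpa using this
      have htrunc : ‖v - Φ (⇑v)‖ = ∑' k : ℕ, ‖(v : ℕ → ℝ) (k + N)‖ := by
        have h := lp.norm_compl_sum_single hp1 v (Finset.range N)
        simp only [ENNReal.toReal_one, Real.rpow_one] at h
        have hsplit := Summable.sum_add_tsum_nat_add N hsumv
        rw [hΦdef]
        rw [h, hnormv]
        linarith [hsplit]
      have htail : ‖v - Φ (⇑v)‖ < ε / 2 := by
        rw [htrunc]
        have hle : ∑' k : ℕ, ‖(v : ℕ → ℝ) (k + N)‖ ≤ ∑' k : ℕ, g (k + N) := by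
          refine Summable.tsum_le_tsum (fun k => ?_) ((summable_nat_add_iff N).mpr hsumv)
            ((summable_nat_add_iff N).mpr hg)
          have h0 := (hvF (k + N)).1
          have hle2 := (hvF (k + N)).2
          rw [Real.norm_eq_abs, abs_of_nonneg h0]
          exact hle2
        linarith
      refine Set.mem_iUnion₂.mpr ⟨y, hyt, ?_⟩
      rw [Metric.mem_ball] at hy ⊢
      calc dist v y ≤ dist v (Φ (⇑v)) + dist (Φ (⇑v)) y := dist_triangle _ _ _
        _ < ε / 2 + ε / 2 := by
            rw [dist_eq_norm]
            exact add_lt_add htail hy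
        _ = ε := by ring
    · -- closedness
      have hF : F = ⋂ n : ℕ,
          (fun v : lp (fun _ : ℕ => ℝ) 1 => (v : ℕ → ℝ) n) ⁻¹' Set.Icc 0 (g n) := by
        ext v
        simp [hFdef, Set.mem_iInter, Set.mem_Icc, forall_and]
      rw [hF]
      exact isClosed_iInter fun n => IsClosed.preimage (heval n) isClosed_Icc
  · -- inclusion of scaled Cantor images
    rintro γ ⟨hγ0, hγ1⟩ v hv
    obtain ⟨w, hw, rfl⟩ := hv
    obtain ⟨x, hx⟩ := hw
    intro n
    have hcoord : (((1 - γ) • w : lp (fun _ : ℕ => ℝ) 1) : ℕ → ℝ) n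
        = (1 - γ) * ((w : ℕ → ℝ) n) := by
      rw [lp.coeFn_smul]
      simp [smul_eq_mul]
    rw [hcoord, hx n]
    have hc0 : (0 : ℝ) ≤ ((x n : ℕ) : ℝ) := Nat.cast_nonneg _
    have hc1 : ((x n : ℕ) : ℝ) ≤ 1 := by
      have : (x n : ℕ) ≤ 1 := Nat.lt_succ_iff.mp (x n).isLt
      exact_mod_cast this
    have h1γ : (0 : ℝ) ≤ 1 - γ := by linarith
    have hγn : (0 : ℝ) ≤ γ ^ n := pow_nonneg hγ0.le _
    constructor
    · positivity
    · have hkey := aux_key_ineq hγ0 hγ1 n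
      have hq : (0 : ℝ) ≤ (1 - γ) ^ 2 * γ ^ n := by positivity
      have hm := mul_le_mul_of_nonneg_left hc1 hq
      have : (1 - γ) * ((1 - γ) * γ ^ n * ((x n : ℕ) : ℝ))
          ≤ (1 - γ) ^ 2 * γ ^ n := by nlinarith [hm]
      linarith
end

section
/- Let A be a unital C*-algebra over ℂ and let φ, ψ be states on A. Then the norm of φ − ψ in the dual space of A equals sup{ |φ(a) − ψ(a)| : a ∈ A, a = a*, and inf_{α∈ℝ} ‖a − α·1‖ ≤ 1 }. -/
open scoped ComplexOrder
open Complex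

-- hermitian property of positive unital functionals
lemma herm_aux {A : Type*} [NormedRing A] [StarRing A] [CStarRing A]
    [NormedAlgebra ℂ A] [StarModule ℂ A]
    (φ : A →L[ℂ] ℂ) (hφ1 : φ 1 = 1) (hpos : ∀ a : A, 0 ≤ φ (star a * a)) (a : A) :
    φ (star a) = starRingEnd ℂ (φ a) := by
  have h1 : 0 ≤ φ (star (1 + a) * (1 + a)) := hpos _
  have h2 : 0 ≤ φ (star (1 + Complex.I • a) * (1 + Complex.I • a)) := hpos _
  have h0 : 0 ≤ φ (star a * a) := hpos a
  have e1 : star (1 + a) * (1 + a) = 1 + a + star a + star a * a := by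
    simp [add_mul, mul_add]; abel
  have e2 : star (1 + Complex.I • a) * (1 + Complex.I • a)
      = 1 + Complex.I • a - Complex.I • star a + star a * a := by
    simp [add_mul, mul_add, star_smul, smul_smul, smul_sub, sub_smul, Complex.conj_I]
    module
  rw [e1] at h1
  rw [e2] at h2
  simp only [map_add, map_sub, map_smul, hφ1] at h1 h2
  rw [Complex.le_def] at h1 h2 h0
  simp at h1 h2 h0
  apply Complex.ext
  · -- real parts
    have := h2.2
    simp [Complex.add_im, Complex.sub_im, Complex.mul_im, h0.2] at this
    simp [Complex.conj_re]
    linarith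
  · have := h1.2
    simp [h0.2] at this
    simp [Complex.conj_im]
    linarith

/-- For states `φ, ψ` on a unital C*-algebra `A`, the norm of `φ − ψ` in the dual of `A`
equals `sup { |φ(a) − ψ(a)| : a = a* ∈ A, inf_{α∈ℝ} ‖a − α·1‖ ≤ 1 }`. -/
theorem norm_state_diff_eq_sup (A : Type*) [NormedRing A] [StarRing A] [CStarRing A]
    [NormedAlgebra ℂ A] [StarModule ℂ A] [CompleteSpace A]
    (φ ψ : A →L[ℂ] ℂ)
    (hφ1 : φ 1 = 1) (hψ1 : ψ 1 = 1)
    (hφpos : ∀ a : A, 0 ≤ φ (star a * a)) (hψpos : ∀ a : A, 0 ≤ ψ (star a * a)) :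
    ‖φ - ψ‖ = sSup {r : ℝ | ∃ a : A, IsSelfAdjoint a ∧
        (⨅ α : ℝ, ‖a - α • (1 : A)‖) ≤ 1 ∧ r = ‖φ a - ψ a‖} := by
  set f := φ - ψ with hf
  set S := {r : ℝ | ∃ a : A, IsSelfAdjoint a ∧
        (⨅ α : ℝ, ‖a - α • (1 : A)‖) ≤ 1 ∧ r = ‖φ a - ψ a‖} with hS
  have hfa : ∀ a : A, f a = φ a - ψ a := fun a => rfl
  have hf1 : f 1 = 0 := by simp [hfa, hφ1, hψ1]
  have hherm : ∀ a : A, f (star a) = starRingEnd ℂ (f a) := by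
    intro a
    simp [hfa, herm_aux φ hφ1 hφpos a, herm_aux ψ hψ1 hψpos a]
  -- every element of S is ≤ ‖f‖
  have hub : ∀ r ∈ S, r ≤ ‖f‖ := by
    rintro r ⟨a, hsa, hinf, rfl⟩
    have key : ∀ α : ℝ, ‖φ a - ψ a‖ ≤ ‖f‖ * ‖a - α • (1 : A)‖ := by
      intro α
      have : f (a - α • (1 : A)) = f a := by
        rw [map_sub, f.map_smul_of_tower, hf1, smul_zero, sub_zero]
      calc ‖φ a - ψ a‖ = ‖f (a - α • (1:A))‖ := by
            rw [this]; simp [hfa]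
        _ ≤ ‖f‖ * ‖a - α • (1:A)‖ := f.le_opNorm _
    rcases eq_or_lt_of_le (norm_nonneg f) with h0 | h0
    · have := key 0
      simp [← h0] at this
      rw [← h0]
      exact le_antisymm (by rw [this]; simp) (norm_nonneg _) |>.le
    · have hb : BddBelow (Set.range fun α : ℝ => ‖a - α • (1:A)‖) := by
        refine ⟨0, ?_⟩
        rintro x ⟨α, rfl⟩
        exact norm_nonneg _
      have h1 : ‖φ a - ψ a‖ / ‖f‖ ≤ ⨅ α : ℝ, ‖a - α • (1:A)‖ := by
        refine le_ciInf fun α => ?_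
        rw [div_le_iff₀' h0]
        exact key α
      have := h1.trans hinf
      rw [div_le_one h0] at this
      linarith
  have hne : (0:ℝ) ∈ S := by
    refine ⟨0, IsSelfAdjoint.zero A, ?_, by simp⟩
    have : (⨅ α : ℝ, ‖(0:A) - α • (1 : A)‖) ≤ ‖(0:A) - (0:ℝ) • (1:A)‖ := by
      refine ciInf_le ⟨0, ?_⟩ 0
      rintro x ⟨α, rfl⟩
      exact norm_nonneg _
    simpa using this.trans (by simp)
  have hbdd : BddAbove S := ⟨‖f‖, fun r hr => hub r hr⟩
  refine le_antisymm ?_ (Real.sSup_le hub (norm_nonneg f))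
  -- ‖f‖ ≤ sSup S
  have hM0 : 0 ≤ sSup S := le_csSup hbdd hne
  refine f.opNorm_le_bound hM0 fun x => ?_
  by_cases hx : f x = 0
  · rw [hx, norm_zero]
    positivity
  have hxn : ‖x‖ ≠ 0 := by
    intro h
    exact hx (by rw [norm_eq_zero.mp h, map_zero])
  have hxpos : 0 < ‖x‖ := lt_of_le_of_ne (norm_nonneg x) (Ne.symm hxn)
  set u : ℂ := starRingEnd ℂ (f x) / ‖f x‖ with hu
  have habs : ‖f x‖ ≠ 0 := by simpa using hx
  have huabs : ‖u‖ = 1 := by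
    simp [hu, map_div₀, habs]
  set b : A := (‖x‖⁻¹ : ℝ) • ((2:ℝ)⁻¹ • (u • x + star (u • x))) with hb
  have hbsa : IsSelfAdjoint b := by
    rw [IsSelfAdjoint, hb]
    rw [star_smul, star_smul, star_add, star_star, star_trivial, star_trivial]
    rw [add_comm]
  have hbnorm : ‖b‖ ≤ 1 := by
    rw [hb]
    rw [norm_smul, norm_smul]
    have h1 : ‖u • x + star (u • x)‖ ≤ 2 * ‖x‖ := by
      calc ‖u • x + star (u • x)‖ ≤ ‖u • x‖ + ‖star (u • x)‖ := norm_add_le _ _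
        _ = 2 * ‖x‖ := by
            rw [norm_star, norm_smul]
            simp only [huabs, one_mul]
            ring
    calc ‖(‖x‖⁻¹ : ℝ)‖ * (‖(2:ℝ)⁻¹‖ * ‖u • x + star (u • x)‖)
        ≤ ‖x‖⁻¹ * ((2:ℝ)⁻¹ * (2 * ‖x‖)) := by
          rw [Real.norm_eq_abs, Real.norm_eq_abs, _root_.abs_of_nonneg (by positivity),
            _root_.abs_of_nonneg (by positivity)]
          gcongr
      _ = 1 := by field_simp
  have habsC : ((‖f x‖ : ℝ) : ℂ) ≠ 0 := by
    exact_mod_cast habs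
  have h2 : u * f x = ((‖f x‖ : ℝ) : ℂ) := by
    rw [hu, div_mul_eq_mul_div]
    rw [show starRingEnd ℂ (f x) * f x = ((‖f x‖ ^ 2 : ℝ) : ℂ) by
      rw [Complex.sq_norm]; exact Complex.normSq_eq_conj_mul_self.symm]
    push_cast
    rw [sq]
    field_simp
  have hfb : f b = ((‖x‖⁻¹ * ‖f x‖ : ℝ) : ℂ) := by
    rw [hb, f.map_smul_of_tower, f.map_smul_of_tower, map_add, map_smul]
    have h1 : f (star (u • x)) = starRingEnd ℂ u * starRingEnd ℂ (f x) := by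
      rw [star_smul, f.map_smul_of_tower, hherm]
      simp [smul_eq_mul]
    rw [h1, ← map_mul, smul_eq_mul, h2]
    have : starRingEnd ℂ ((‖f x‖ : ℝ) : ℂ) = ((‖f x‖ : ℝ) : ℂ) :=
      Complex.conj_ofReal _
    rw [← h2, h2, this]
    push_cast [Complex.real_smul]
    ring
  -- b witnesses membership in S
  have hmem : (‖x‖⁻¹ * ‖f x‖ : ℝ) ∈ S := by
    refine ⟨b, hbsa, ?_, ?_⟩
    · have : (⨅ α : ℝ, ‖b - α • (1 : A)‖) ≤ ‖b - (0:ℝ) • (1:A)‖ := by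
        refine ciInf_le ⟨0, ?_⟩ 0
        rintro y ⟨α, rfl⟩
        exact norm_nonneg _
      simpa using this.trans (by simpa using hbnorm)
    · rw [← hfa, hfb]
      rw [Complex.norm_real, Real.norm_eq_abs, _root_.abs_of_nonneg (by positivity)]
  have hle : (‖x‖⁻¹ * ‖f x‖ : ℝ) ≤ sSup S := le_csSup hbdd hmem
  have : ‖f x‖ = ‖f x‖ := rfl
  rw [this]
  rw [mul_comm]
  calc ‖f x‖ = ‖x‖ * (‖x‖⁻¹ * ‖f x‖) := by field_simp
    _ ≤ ‖x‖ * sSup S := mul_le_mul_of_nonneg_left hle hxpos.le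
end

section
/- Let n ≥ 1 and let φ, ψ be states on M_n(ℂ). Then the norm of φ − ψ in the dual space of M_n(ℂ) (with M_n(ℂ) carrying the L² operator norm) equals sup{ |φ(A) − ψ(A)| : A ∈ M_n(ℂ) Hermitian and ‖A ⊗ₖ 1ₙ − 1ₙ ⊗ₖ A‖ ≤ 2 }. -/
open scoped Kronecker ComplexOrder

/-- The `L²` operator norm of a square complex matrix: its norm as an operator on
Euclidean space. -/
noncomputable def l2OpNorm {m : Type*} [Fintype m] [DecidableEq m] (A : Matrix m m ℂ) : ℝ :=
  ‖Matrix.toEuclideanCLM (𝕜 := ℂ) A‖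

open scoped Matrix.Norms.L2Operator
open Matrix

section Aux

set_option linter.unusedSectionVars false

variable {m : Type*} [Fintype m] [DecidableEq m]

lemma aux_l2OpNorm_eq (A : Matrix m m ℂ) : l2OpNorm A = ‖A‖ := rfl

lemma aux_state_star {n : ℕ} (φ : Matrix (Fin n) (Fin n) ℂ →ₗ[ℂ] ℂ) (hφ1 : φ 1 = 1)
    (hφpos : ∀ A : Matrix (Fin n) (Fin n) ℂ, 0 ≤ φ (A.conjTranspose * A))
    (A : Matrix (Fin n) (Fin n) ℂ) : φ Aᴴ = starRingEnd ℂ (φ A) := by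
  have key : ∀ t : ℂ, (φ (Aᴴ * A) + t * φ Aᴴ + (starRingEnd ℂ t) * φ A
      + (starRingEnd ℂ t) * t).im = 0 := by
    intro t
    have h := hφpos (A + t • 1)
    rw [Complex.le_def] at h
    have e : (A + t • 1)ᴴ * (A + t • 1)
        = Aᴴ * A + t • Aᴴ + (starRingEnd ℂ) t • A + ((starRingEnd ℂ) t * t) • 1 := by
      rw [Matrix.conjTranspose_add, Matrix.conjTranspose_smul, Matrix.conjTranspose_one]
      simp only [Matrix.add_mul, Matrix.mul_add, smul_mul_assoc, mul_smul_comm,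
        Matrix.mul_one, Matrix.one_mul, smul_smul, smul_add, Complex.star_def]
      module
    rw [e] at h
    simp only [map_add, φ.map_smul, smul_eq_mul, hφ1, mul_one] at h
    exact h.2.symm
  have h0 : (φ (Aᴴ * A)).im = 0 := ((Complex.le_def.mp (hφpos A)).2).symm
  have h1 := key 1
  have hI := key Complex.I
  simp only [_root_.map_one, one_mul, Complex.conj_I, Complex.add_im, Complex.mul_im,
    Complex.I_re, Complex.I_im, Complex.neg_re, Complex.neg_im, h0, Complex.one_re,
    Complex.one_im, Complex.mul_re] at h1 hI
  apply Complex.ext <;>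
    simp only [Complex.conj_re, Complex.conj_im] <;> linarith

lemma aux_clm_apply_eq (A : Matrix m m ℂ) (x : EuclideanSpace ℂ m) :
    Matrix.toEuclideanCLM (𝕜 := ℂ) A x
      = (WithLp.equiv 2 (m → ℂ)).symm (A.mulVec (WithLp.equiv 2 (m → ℂ) x)) := by
  have h := Matrix.toEuclideanCLM_toLp (𝕜 := ℂ) A ((WithLp.equiv 2 (m → ℂ)) x)
  simpa [Matrix.toLin'_apply] using h

lemma aux_eig_le_opNorm (M : Matrix m m ℂ) (x : EuclideanSpace ℂ m) (hx : ‖x‖ = 1) (ν : ℂ)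
    (h : Matrix.toEuclideanCLM (𝕜 := ℂ) M x = ν • x) : ‖ν‖ ≤ ‖M‖ := by
  have h1 : ‖ν‖ = ‖Matrix.toEuclideanCLM (𝕜 := ℂ) M x‖ := by
    rw [h, norm_smul, hx, mul_one]
  rw [Matrix.cstar_norm_def, h1]
  have h2 := (Matrix.toEuclideanCLM (𝕜 := ℂ) M).le_opNorm x
  rwa [hx, mul_one] at h2

lemma aux_opNorm_le_of_eigenbasis (M : Matrix m m ℂ)
    (b : OrthonormalBasis m ℂ (EuclideanSpace ℂ m)) (ν : m → ℂ)
    (h : ∀ j, Matrix.toEuclideanCLM (𝕜 := ℂ) M (b j) = ν j • b j) {C : ℝ} (hC : 0 ≤ C)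
    (hν : ∀ j, ‖ν j‖ ≤ C) : ‖M‖ ≤ C := by
  rw [Matrix.cstar_norm_def]
  apply ContinuousLinearMap.opNorm_le_bound _ hC
  intro x
  set T := Matrix.toEuclideanCLM (𝕜 := ℂ) M with hT
  have hTx : T x = ∑ j, (ν j * b.repr x j) • b j := by
    conv_lhs => rw [← b.sum_repr x]
    rw [map_sum]
    congr 1
    ext j
    rw [_root_.map_smul, h j, smul_smul, mul_comm]
  have hrepr : ∀ i, b.repr (T x) i = ν i * b.repr x i := by
    intro i
    rw [b.repr_apply_apply, hTx, b.orthonormal.inner_right_fintype]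
  have h2 : ‖T x‖ = ‖b.repr (T x)‖ := (b.repr.norm_map (T x)).symm
  have h3 : ‖x‖ = ‖b.repr x‖ := (b.repr.norm_map x).symm
  rw [h2, h3, EuclideanSpace.norm_eq, EuclideanSpace.norm_eq, ← Real.sqrt_sq hC,
    ← Real.sqrt_mul (by positivity), Finset.mul_sum]
  apply Real.sqrt_le_sqrt
  apply Finset.sum_le_sum
  intro i _
  rw [hrepr i]
  calc ‖ν i * b.repr x i‖ ^ 2 = (‖ν i‖ * ‖b.repr x i‖)^2 := by rw [norm_mul]
    _ ≤ (C * ‖b.repr x i‖)^2 := by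
        apply pow_le_pow_left₀ (by positivity)
        exact mul_le_mul_of_nonneg_right (hν i) (norm_nonneg _)
    _ = C^2 * ‖b.repr x i‖^2 := by ring

lemma aux_kron_mulVec (A B : Matrix m m ℂ) (x y : m → ℂ) :
    (A ⊗ₖ B) *ᵥ (fun p : m × m => x p.1 * y p.2)
      = fun p : m × m => (A *ᵥ x) p.1 * (B *ᵥ y) p.2 := by
  funext p
  simp only [Matrix.mulVec, dotProduct, Matrix.kroneckerMap_apply,
    Fintype.sum_prod_type]
  rw [Finset.sum_mul_sum]
  congr 1; funext k; congr 1; funext l; ring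

lemma aux_tensor_norm (x y : EuclideanSpace ℂ m) :
    ‖(WithLp.equiv 2 ((m × m) → ℂ)).symm (fun p : m × m => x p.1 * y p.2)‖ = ‖x‖ * ‖y‖ := by
  rw [EuclideanSpace.norm_eq, EuclideanSpace.norm_eq, EuclideanSpace.norm_eq,
    ← Real.sqrt_mul (by positivity)]
  congr 1
  rw [Finset.sum_mul_sum, Fintype.sum_prod_type]
  congr 1; funext i; congr 1; funext j
  rw [WithLp.equiv_symm_apply, PiLp.toLp_apply]
  simp [norm_mul, mul_pow]

lemma aux_kron_one_mulVec_apply (A : Matrix m m ℂ) (u : m × m → ℂ) (i j : m) :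
    ((A ⊗ₖ (1 : Matrix m m ℂ)) *ᵥ u) (i, j) = (A *ᵥ fun k => u (k, j)) i := by
  simp only [Matrix.mulVec, dotProduct, Matrix.kroneckerMap_apply,
    Fintype.sum_prod_type, Matrix.one_apply]
  rw [Finset.sum_comm]
  simp [Finset.sum_ite_eq, mul_ite, Finset.mul_sum]

lemma aux_one_kron_mulVec_apply (A : Matrix m m ℂ) (u : m × m → ℂ) (i j : m) :
    (((1 : Matrix m m ℂ) ⊗ₖ A) *ᵥ u) (i, j) = (A *ᵥ fun l => u (i, l)) j := by
  simp only [Matrix.mulVec, dotProduct, Matrix.kroneckerMap_apply,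
    Fintype.sum_prod_type, Matrix.one_apply]
  simp [Finset.sum_ite_eq, mul_ite, Finset.mul_sum, ite_mul]

lemma aux_kron_one_norm_le (A : Matrix m m ℂ) : ‖A ⊗ₖ (1 : Matrix m m ℂ)‖ ≤ ‖A‖ := by
  rw [Matrix.cstar_norm_def]
  apply ContinuousLinearMap.opNorm_le_bound _ (norm_nonneg A)
  intro x
  set u : m × m → ℂ := WithLp.equiv 2 ((m × m) → ℂ) x with hu
  have happ : Matrix.toEuclideanCLM (𝕜 := ℂ) (A ⊗ₖ (1 : Matrix m m ℂ)) x
      = (WithLp.equiv 2 ((m × m) → ℂ)).symm ((A ⊗ₖ (1 : Matrix m m ℂ)) *ᵥ u) := by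
    have h := Matrix.toEuclideanCLM_toLp (𝕜 := ℂ) (A ⊗ₖ (1 : Matrix m m ℂ)) u
    simpa [Matrix.toLin'_apply, hu] using h
  rw [happ]
  have hge : 0 ≤ ‖A‖ * ‖x‖ := by positivity
  rw [← Real.sqrt_sq (norm_nonneg _), ← Real.sqrt_sq hge]
  apply Real.sqrt_le_sqrt
  rw [EuclideanSpace.norm_eq, Real.sq_sqrt (by positivity), Fintype.sum_prod_type]
  have hcol : ∀ j : m, (∑ i, ‖((A ⊗ₖ (1 : Matrix m m ℂ)) *ᵥ u) (i, j)‖ ^ 2)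
      ≤ ‖A‖^2 * ∑ k, ‖u (k, j)‖^2 := by
    intro j
    set c : EuclideanSpace ℂ m := (WithLp.equiv 2 (m → ℂ)).symm (fun k => u (k, j)) with hc
    have h1 : ∀ i, ((A ⊗ₖ (1 : Matrix m m ℂ)) *ᵥ u) (i, j) = (A *ᵥ c) i := fun i =>
      aux_kron_one_mulVec_apply A u i j
    simp only [h1]
    have h2 := Matrix.l2_opNorm_mulVec A c
    have h3 : ‖(EuclideanSpace.equiv m ℂ).symm (A *ᵥ c)‖ ^ 2 ≤ (‖A‖ * ‖c‖)^2 :=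
      pow_le_pow_left₀ (norm_nonneg _) h2 2
    rw [EuclideanSpace.norm_eq, Real.sq_sqrt (by positivity)] at h3
    have h4 : ‖c‖^2 = ∑ k, ‖u (k, j)‖^2 := by
      rw [EuclideanSpace.norm_eq, Real.sq_sqrt (by positivity)]
      rfl
    calc ∑ i, ‖(A *ᵥ c) i‖ ^ 2
        = ∑ i, ‖(EuclideanSpace.equiv m ℂ).symm (A *ᵥ c) i‖ ^ 2 := rfl
      _ ≤ (‖A‖ * ‖c‖)^2 := h3
      _ = ‖A‖^2 * ∑ k, ‖u (k, j)‖^2 := by rw [mul_pow, h4]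
  calc (∑ i, ∑ j, ‖(WithLp.equiv 2 ((m × m) → ℂ)).symm ((A ⊗ₖ (1:Matrix m m ℂ)) *ᵥ u) (i, j)‖ ^ 2)
      = ∑ j, ∑ i, ‖((A ⊗ₖ (1 : Matrix m m ℂ)) *ᵥ u) (i, j)‖ ^ 2 := by
        rw [Finset.sum_comm]; rfl
    _ ≤ ∑ j, ‖A‖^2 * ∑ k, ‖u (k, j)‖^2 := Finset.sum_le_sum fun j _ => hcol j
    _ = ‖A‖^2 * ∑ j, ∑ k, ‖u (k, j)‖^2 := by rw [Finset.mul_sum]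
    _ = (‖A‖ * ‖x‖)^2 := by
        rw [mul_pow, EuclideanSpace.norm_eq, Real.sq_sqrt (by positivity), Fintype.sum_prod_type]
        rw [Finset.sum_comm]
        rfl

lemma aux_one_kron_norm_le (A : Matrix m m ℂ) : ‖(1 : Matrix m m ℂ) ⊗ₖ A‖ ≤ ‖A‖ := by
  rw [Matrix.cstar_norm_def]
  apply ContinuousLinearMap.opNorm_le_bound _ (norm_nonneg A)
  intro x
  set u : m × m → ℂ := WithLp.equiv 2 ((m × m) → ℂ) x with hu
  have happ : Matrix.toEuclideanCLM (𝕜 := ℂ) ((1 : Matrix m m ℂ) ⊗ₖ A) x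
      = (WithLp.equiv 2 ((m × m) → ℂ)).symm (((1 : Matrix m m ℂ) ⊗ₖ A) *ᵥ u) := by
    have h := Matrix.toEuclideanCLM_toLp (𝕜 := ℂ) ((1 : Matrix m m ℂ) ⊗ₖ A) u
    simpa [Matrix.toLin'_apply, hu] using h
  rw [happ]
  have hge : 0 ≤ ‖A‖ * ‖x‖ := by positivity
  rw [← Real.sqrt_sq (norm_nonneg _), ← Real.sqrt_sq hge]
  apply Real.sqrt_le_sqrt
  rw [EuclideanSpace.norm_eq, Real.sq_sqrt (by positivity), Fintype.sum_prod_type]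
  have hrow : ∀ i : m, (∑ j, ‖(((1 : Matrix m m ℂ) ⊗ₖ A) *ᵥ u) (i, j)‖ ^ 2)
      ≤ ‖A‖^2 * ∑ l, ‖u (i, l)‖^2 := by
    intro i
    set c : EuclideanSpace ℂ m := (WithLp.equiv 2 (m → ℂ)).symm (fun l => u (i, l)) with hc
    have h1 : ∀ j, (((1 : Matrix m m ℂ) ⊗ₖ A) *ᵥ u) (i, j) = (A *ᵥ c) j := fun j =>
      aux_one_kron_mulVec_apply A u i j
    simp only [h1]
    have h2 := Matrix.l2_opNorm_mulVec A c
    have h3 : ‖(EuclideanSpace.equiv m ℂ).symm (A *ᵥ c)‖ ^ 2 ≤ (‖A‖ * ‖c‖)^2 :=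
      pow_le_pow_left₀ (norm_nonneg _) h2 2
    rw [EuclideanSpace.norm_eq, Real.sq_sqrt (by positivity)] at h3
    have h4 : ‖c‖^2 = ∑ l, ‖u (i, l)‖^2 := by
      rw [EuclideanSpace.norm_eq, Real.sq_sqrt (by positivity)]
      rfl
    calc ∑ j, ‖(A *ᵥ c) j‖ ^ 2
        = ∑ j, ‖(EuclideanSpace.equiv m ℂ).symm (A *ᵥ c) j‖ ^ 2 := rfl
      _ ≤ (‖A‖ * ‖c‖)^2 := h3
      _ = ‖A‖^2 * ∑ l, ‖u (i, l)‖^2 := by rw [mul_pow, h4]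
  calc (∑ i, ∑ j, ‖(WithLp.equiv 2 ((m × m) → ℂ)).symm (((1:Matrix m m ℂ) ⊗ₖ A) *ᵥ u) (i, j)‖ ^ 2)
      = ∑ i, ∑ j, ‖(((1 : Matrix m m ℂ) ⊗ₖ A) *ᵥ u) (i, j)‖ ^ 2 := rfl
    _ ≤ ∑ i, ‖A‖^2 * ∑ l, ‖u (i, l)‖^2 := Finset.sum_le_sum fun i _ => hrow i
    _ = ‖A‖^2 * ∑ i, ∑ l, ‖u (i, l)‖^2 := by rw [Finset.mul_sum]
    _ = (‖A‖ * ‖x‖)^2 := by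
        rw [mul_pow, EuclideanSpace.norm_eq, Real.sq_sqrt (by positivity), Fintype.sum_prod_type]
        rfl

end Aux

/-- For states `φ, ψ` on `M_n(ℂ)` (with the `L²` operator norm), the norm of `φ − ψ` in the
dual space equals `sup { |φ(A) − ψ(A)| : A Hermitian, ‖A ⊗ₖ 1 − 1 ⊗ₖ A‖ ≤ 2 }`. -/
theorem norm_state_diff_eq_sup_matrix (n : ℕ) (hn : 1 ≤ n)
    (φ ψ : Matrix (Fin n) (Fin n) ℂ →ₗ[ℂ] ℂ)
    (hφ1 : φ 1 = 1) (hψ1 : ψ 1 = 1)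
    (hφpos : ∀ A : Matrix (Fin n) (Fin n) ℂ, 0 ≤ φ (A.conjTranspose * A))
    (hψpos : ∀ A : Matrix (Fin n) (Fin n) ℂ, 0 ≤ ψ (A.conjTranspose * A)) :
    sSup {r : ℝ | ∃ A : Matrix (Fin n) (Fin n) ℂ,
        l2OpNorm A ≤ 1 ∧ r = ‖φ A - ψ A‖}
      = sSup {r : ℝ | ∃ A : Matrix (Fin n) (Fin n) ℂ, A.IsHermitian ∧
        l2OpNorm (A ⊗ₖ (1 : Matrix (Fin n) (Fin n) ℂ)
            - (1 : Matrix (Fin n) (Fin n) ℂ) ⊗ₖ A) ≤ 2 ∧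
        r = ‖φ A - ψ A‖} := by
  have hFstar : ∀ A : Matrix (Fin n) (Fin n) ℂ,
      φ Aᴴ - ψ Aᴴ = starRingEnd ℂ (φ A - ψ A) := by
    intro A
    rw [aux_state_star φ hφ1 hφpos A, aux_state_star ψ hψ1 hψpos A, map_sub]
  refine congrArg sSup (Set.Subset.antisymm ?_ ?_)
  · -- ball set ⊆ hermitian set
    rintro r ⟨A, hA1, rfl⟩
    rw [aux_l2OpNorm_eq] at hA1
    set z : ℂ := φ A - ψ A with hz
    set u : ℂ := starRingEnd ℂ z / (‖z‖ : ℂ) with hudef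
    have hunorm : ‖u‖ ≤ 1 := by
      rw [hudef, norm_div]
      have h1 : ‖starRingEnd ℂ z‖ = ‖z‖ := by
        simp
      have h2 : ‖(‖z‖ : ℂ)‖ = ‖z‖ := by
        simp [Complex.norm_real, abs_of_nonneg (norm_nonneg z)]
      rw [h1, h2]
      exact div_self_le_one ‖z‖
    have huz : u * z = (‖z‖ : ℂ) := by
      by_cases hzz : z = 0
      · simp [hudef, hzz]
      · have habs : (‖z‖ : ℂ) ≠ 0 := by
          simpa using norm_ne_zero_iff.mpr hzz
        rw [hudef]
        field_simp
        rw [mul_comm, Complex.mul_conj, Complex.normSq_eq_norm_sq]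
        push_cast
        ring
    set B : Matrix (Fin n) (Fin n) ℂ :=
      (((1/2 : ℝ)) : ℂ) • (u • A + (starRingEnd ℂ u) • Aᴴ) with hB
    have hstar12 : star ((((1/2 : ℝ)) : ℂ)) = (((1/2 : ℝ)) : ℂ) := by
      rw [Complex.star_def, Complex.conj_ofReal]
    have hBherm : B.IsHermitian := by
      rw [Matrix.IsHermitian, hB, Matrix.conjTranspose_smul, hstar12,
        Matrix.conjTranspose_add, Matrix.conjTranspose_smul, Matrix.conjTranspose_smul,
        Matrix.conjTranspose_conjTranspose]
      simp only [Complex.star_def, Complex.conj_conj]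
      rw [add_comm]
    have hBnorm : ‖B‖ ≤ 1 := by
      rw [hB]
      calc ‖(((1/2 : ℝ)) : ℂ) • (u • A + (starRingEnd ℂ u) • Aᴴ)‖
          = (1/2) * ‖u • A + (starRingEnd ℂ u) • Aᴴ‖ := by
            rw [norm_smul]
            norm_num [Complex.norm_real]
        _ ≤ (1/2) * (‖u • A‖ + ‖(starRingEnd ℂ u) • Aᴴ‖) := by
            apply mul_le_mul_of_nonneg_left (norm_add_le _ _); norm_num
        _ = (1/2) * (‖u‖ * ‖A‖ + ‖u‖ * ‖Aᴴ‖) := by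
            rw [norm_smul, norm_smul]
            simp
        _ = ‖u‖ * ‖A‖ := by rw [Matrix.l2_opNorm_conjTranspose]; ring
        _ ≤ 1 * 1 := by
            apply mul_le_mul hunorm hA1 (norm_nonneg _) (by norm_num)
        _ = 1 := by norm_num
    have hFB : φ B - ψ B = (‖z‖ : ℂ) := by
      have hthis : φ B - ψ B
          = (((1/2 : ℝ)) : ℂ) * (u * z + starRingEnd ℂ u * starRingEnd ℂ z) := by
        simp only [hB, φ.map_smul, ψ.map_smul, map_add, smul_eq_mul,
          aux_state_star φ hφ1 hφpos A, aux_state_star ψ hψ1 hψpos A, hz, map_sub]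
        ring
      rw [hthis, ← _root_.map_mul, huz, Complex.conj_ofReal]
      push_cast
      ring
    refine ⟨B, hBherm, ?_, ?_⟩
    · rw [aux_l2OpNorm_eq]
      calc ‖B ⊗ₖ (1 : Matrix (Fin n) (Fin n) ℂ) - (1 : Matrix (Fin n) (Fin n) ℂ) ⊗ₖ B‖
          ≤ ‖B ⊗ₖ (1 : Matrix (Fin n) (Fin n) ℂ)‖ + ‖(1 : Matrix (Fin n) (Fin n) ℂ) ⊗ₖ B‖ :=
            norm_sub_le _ _
        _ ≤ ‖B‖ + ‖B‖ := add_le_add (aux_kron_one_norm_le B) (aux_one_kron_norm_le B)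
        _ ≤ 2 := by linarith
    · rw [hFB]
      rw [Complex.norm_real, Real.norm_eq_abs, abs_of_nonneg (norm_nonneg z)]
  · -- hermitian set ⊆ ball set
    rintro r ⟨A, hAh, hk, rfl⟩
    rw [aux_l2OpNorm_eq] at hk
    have hne : (Finset.univ : Finset (Fin n)).Nonempty := by
      have : Nonempty (Fin n) := ⟨⟨0, hn⟩⟩
      exact Finset.univ_nonempty
    set b := hAh.eigenvectorBasis with hbdef
    set μ := hAh.eigenvalues with hμdef
    have heig : ∀ j, Matrix.toEuclideanCLM (𝕜 := ℂ) A (b j) = ((μ j : ℝ) : ℂ) • b j := by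
      intro j
      rw [aux_clm_apply_eq]
      have h0 : A *ᵥ (WithLp.equiv 2 (Fin n → ℂ) (b j)) = μ j • ⇑(b j) :=
        hAh.mulVec_eigenvectorBasis j
      rw [h0]
      rw [show (μ j • ⇑(b j) : Fin n → ℂ) = WithLp.equiv 2 (Fin n → ℂ) (μ j • b j) from rfl]
      rw [Equiv.symm_apply_apply, RCLike.real_smul_eq_coe_smul (K := ℂ)]
      norm_num
    set Mx := Finset.univ.sup' hne μ with hMx
    set mn := Finset.univ.inf' hne μ with hmn
    have hMxle : ∀ j, μ j ≤ Mx := fun j => Finset.le_sup' μ (Finset.mem_univ j)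
    have hmnle : ∀ j, mn ≤ μ j := fun j => Finset.inf'_le μ (Finset.mem_univ j)
    -- spectral diameter bounded by the Kronecker norm
    have hdiam : Mx - mn ≤ 2 := by
      obtain ⟨i0, -, hi0⟩ := Finset.exists_mem_eq_sup' hne μ
      obtain ⟨j0, -, hj0⟩ := Finset.exists_mem_eq_inf' hne μ
      have hMxi : Mx = μ i0 := by rw [hMx, hi0]
      have hmnj : mn = μ j0 := by rw [hmn, hj0]
      set x0 : Fin n → ℂ := fun k => b i0 k with hx0
      set y0 : Fin n → ℂ := fun k => b j0 k with hy0
      set w : EuclideanSpace ℂ (Fin n × Fin n) :=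
        (WithLp.equiv 2 ((Fin n × Fin n) → ℂ)).symm
          (fun p : Fin n × Fin n => x0 p.1 * y0 p.2) with hw
      have hwnorm : ‖w‖ = 1 := by
        have h := aux_tensor_norm (b i0) (b j0)
        rw [b.orthonormal.1 i0, b.orthonormal.1 j0, mul_one] at h
        exact h
      have h1 : A *ᵥ x0 = μ i0 • x0 := hAh.mulVec_eigenvectorBasis i0
      have h2 : A *ᵥ y0 = μ j0 • y0 := hAh.mulVec_eigenvectorBasis j0
      have hmv : (A ⊗ₖ (1 : Matrix (Fin n) (Fin n) ℂ)
            - (1 : Matrix (Fin n) (Fin n) ℂ) ⊗ₖ A) *ᵥ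
            (fun p : Fin n × Fin n => x0 p.1 * y0 p.2)
          = fun p : Fin n × Fin n =>
            (((Mx - mn : ℝ)) : ℂ) * (x0 p.1 * y0 p.2) := by
        rw [Matrix.sub_mulVec]
        rw [aux_kron_mulVec A 1 x0 y0, aux_kron_mulVec 1 A x0 y0]
        funext p
        simp only [Pi.sub_apply, Matrix.one_mulVec, h1, h2, Pi.smul_apply, Complex.real_smul]
        rw [hMxi, hmnj]
        push_cast
        ring
      have hweig : Matrix.toEuclideanCLM (𝕜 := ℂ)
            (A ⊗ₖ (1 : Matrix (Fin n) (Fin n) ℂ) - (1 : Matrix (Fin n) (Fin n) ℂ) ⊗ₖ A) w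
          = (((Mx - mn : ℝ)) : ℂ) • w := by
        rw [aux_clm_apply_eq, hw, Equiv.apply_symm_apply, hmv, WithLp.equiv_symm_apply, ← WithLp.toLp_smul]
        simp [Pi.smul_def, smul_eq_mul]
      have := aux_eig_le_opNorm _ w hwnorm _ hweig
      have hnc : ‖(((Mx - mn : ℝ)) : ℂ)‖ = |Mx - mn| := by
        rw [Complex.norm_real, Real.norm_eq_abs]
      rw [hnc] at this
      calc Mx - mn ≤ |Mx - mn| := le_abs_self _
        _ ≤ _ := le_trans this hk
    set c : ℝ := (Mx + mn)/2 with hc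
    set A' : Matrix (Fin n) (Fin n) ℂ := A - (c : ℂ) • 1 with hA'
    have hA'eig : ∀ j, Matrix.toEuclideanCLM (𝕜 := ℂ) A' (b j)
        = (((μ j - c : ℝ)) : ℂ) • b j := by
      intro j
      rw [hA', map_sub, _root_.map_smul, _root_.map_one, ContinuousLinearMap.sub_apply,
        ContinuousLinearMap.smul_apply, ContinuousLinearMap.one_apply, heig j]
      push_cast
      rw [sub_smul]
    have hA'norm : ‖A'‖ ≤ 1 := by
      apply aux_opNorm_le_of_eigenbasis A' b (fun j => (((μ j - c : ℝ)) : ℂ)) hA'eig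
        (by norm_num)
      intro j
      have : ‖(((μ j - c : ℝ)) : ℂ)‖ = |μ j - c| := by
        rw [Complex.norm_real, Real.norm_eq_abs]
      rw [this, abs_le]
      constructor
      · have := hMxle j; have := hmnle j; rw [hc]; linarith
      · have := hMxle j; have := hmnle j; rw [hc]; linarith [hdiam]
    refine ⟨A', by rw [aux_l2OpNorm_eq]; exact hA'norm, ?_⟩
    have : φ A' - ψ A' = φ A - ψ A := by
      rw [hA', map_sub, map_sub, φ.map_smul, ψ.map_smul, hφ1, hψ1]
      ring
    rw [this]
end
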